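/- arXiv:1802.04646 — 7 statements merged into one kernel-verified Lean document; each statement's English description precedes it below -/
import Mathlib

section
/- For f ∈ ℓ^1_A (the Wiener algebra of functions with absolutely summable Taylor coefficients) and w ∈ D, the difference quotient Q_w f (z) = (f(z) - f(w))/(z - w) belongs to ℓ^1_A with ‖Q_w f‖_1 ≤ ‖f‖_1/(1 - |w|). -/
theorem wiener_difference_quotient (a : ℕ → ℂ) (ha : Summable fun k => ‖a k‖)
    (w : ℂ) (hw : ‖w‖ < 1) :
    ∃ b : ℕ → ℂ,
      (∀ z : ℂ, ‖z‖ < 1 → z ≠ w →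
        ∑' n, b n * z ^ n = ((∑' k, a k * z ^ k) - ∑' k, a k * w ^ k) / (z - w)) ∧
      Summable (fun n => ‖b n‖) ∧
      ∑' n, ‖b n‖ ≤ (∑' k, ‖a k‖) / (1 - ‖w‖) := by
  classical
  set c : ℕ → ℕ → ℂ := fun k n => if n < k then a k * w ^ (k - 1 - n) else 0 with hc
  have hwn : (0:ℝ) ≤ ‖w‖ := norm_nonneg w
  have h1w : (0:ℝ) < 1 - ‖w‖ := by linarith
  -- geometric tail bound used repeatedly
  have hgeo : ∀ k : ℕ, ∑ i ∈ Finset.range k, ‖w‖ ^ i ≤ (1 - ‖w‖)⁻¹ := by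
    intro k
    have h := Summable.sum_le_tsum (f := fun i : ℕ => ‖w‖ ^ i) (Finset.range k)
      (fun i _ => by positivity) (summable_geometric_of_lt_one hwn hw)
    exact h.trans_eq (tsum_geometric_of_lt_one hwn hw)
  -- norm of c, summed over n for fixed k
  have hnormsum : ∀ k : ℕ, ∑' n, ‖c k n‖ = ‖a k‖ * ∑ i ∈ Finset.range k, ‖w‖ ^ i := by
    intro k
    have h0 : ∀ n ∉ Finset.range k, ‖c k n‖ = 0 := by
      intro n hn
      simp only [Finset.mem_range, not_lt] at hn
      simp [hc, Nat.not_lt.mpr hn]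
    rw [tsum_eq_sum h0]
    have : ∀ n ∈ Finset.range k, ‖c k n‖ = ‖a k‖ * ‖w‖ ^ (k - 1 - n) := by
      intro n hn
      simp only [Finset.mem_range] at hn
      simp [hc, hn, norm_mul, norm_pow]
    rw [Finset.sum_congr rfl this, ← Finset.mul_sum,
      Finset.sum_range_reflect (fun i => ‖w‖ ^ i) k]
  have hfib : ∀ k : ℕ, Summable fun n => ‖c k n‖ := by
    intro k
    apply summable_of_ne_finset_zero (s := Finset.range k)
    intro n hn
    simp only [Finset.mem_range, not_lt] at hn
    simp [hc, Nat.not_lt.mpr hn]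
  -- summability of the norms over the product
  have hF : Summable (fun p : ℕ × ℕ => ‖c p.1 p.2‖) := by
    rw [summable_prod_of_nonneg (fun p => norm_nonneg _)]
    refine ⟨hfib, ?_⟩
    apply Summable.of_nonneg_of_le (fun k => tsum_nonneg fun n => norm_nonneg _)
      (fun k => ?_) (ha.mul_right (1 - ‖w‖)⁻¹)
    rw [hnormsum k]
    exact mul_le_mul_of_nonneg_left (hgeo k) (norm_nonneg _)
  -- the candidate coefficients
  set b : ℕ → ℂ := fun n => ∑' k, c k n with hb
  have hFswap : Summable (fun p : ℕ × ℕ => ‖c p.2 p.1‖) := hF.prod_symm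
  have hcol : ∀ n : ℕ, Summable fun k => ‖c k n‖ := by
    intro n
    exact hFswap.comp_injective (i := fun k => (n, k)) (fun x y h => by simpa using h)
  have hbn : ∀ n : ℕ, ‖b n‖ ≤ ∑' k, ‖c k n‖ := fun n =>
    norm_tsum_le_tsum_norm (hcol n)
  have hSumCol : Summable fun n => ∑' k, ‖c k n‖ :=
    ((summable_prod_of_nonneg (fun p => norm_nonneg _)).mp hFswap).2
  have hbsum : Summable fun n => ‖b n‖ :=
    Summable.of_nonneg_of_le (fun n => norm_nonneg _) hbn hSumCol
  refine ⟨b, ?_, hbsum, ?_⟩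
  · -- the difference quotient identity
    intro z hz hzw
    have hzn : (0:ℝ) ≤ ‖z‖ := norm_nonneg z
    have hzw' : z - w ≠ 0 := sub_ne_zero.mpr hzw
    -- summability of the full complex family (k, n) ↦ c k n * z ^ n
    have hG : Summable (Function.uncurry (fun k n => c k n * z ^ n)) := by
      apply Summable.of_norm
      refine Summable.of_nonneg_of_le (f := fun p : ℕ × ℕ => ‖a p.1‖ * ‖z‖ ^ p.2)
        (fun p => norm_nonneg _) ?_ ?_
      · rintro ⟨k, n⟩
        simp only [Function.uncurry, hc]
        by_cases h : n < k
        · simp only [h, if_true, norm_mul, norm_pow]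
          have hw1 : ‖w‖ ^ (k - 1 - n) ≤ 1 := pow_le_one₀ hwn hw.le
          calc ‖a k‖ * ‖w‖ ^ (k - 1 - n) * ‖z‖ ^ n
              ≤ ‖a k‖ * 1 * ‖z‖ ^ n := by
                apply mul_le_mul_of_nonneg_right _ (by positivity)
                exact mul_le_mul_of_nonneg_left hw1 (norm_nonneg _)
            _ = ‖a k‖ * ‖z‖ ^ n := by ring
        · simp only [h, if_false, zero_mul, norm_zero]
          positivity
      · exact ha.mul_of_nonneg (summable_geometric_of_lt_one hzn hz)
          (fun k => norm_nonneg _) (fun n => by positivity)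
    -- inner sums of c over n for fixed k give the geometric factor
    have hinner : ∀ k : ℕ, ∑' n, c k n * z ^ n = a k * (z ^ k - w ^ k) / (z - w) := by
      intro k
      have h0 : ∀ n ∉ Finset.range k, c k n * z ^ n = 0 := by
        intro n hn
        simp only [Finset.mem_range, not_lt] at hn
        simp [hc, Nat.not_lt.mpr hn]
      rw [tsum_eq_sum h0]
      have : ∑ n ∈ Finset.range k, c k n * z ^ n
          = a k * ∑ n ∈ Finset.range k, z ^ n * w ^ (k - 1 - n) := by
        rw [Finset.mul_sum]
        refine Finset.sum_congr rfl fun n hn => ?_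
        simp only [Finset.mem_range] at hn
        simp only [hc, hn, if_true]
        ring
      rw [this]
      have hg := geom_sum₂_mul z w k
      field_simp
      linear_combination a k * hg
    calc ∑' n, b n * z ^ n = ∑' n, ∑' k, c k n * z ^ n := by
          refine tsum_congr fun n => ?_
          rw [hb]
          exact (tsum_mul_right).symm
      _ = ∑' k, ∑' n, c k n * z ^ n := Summable.tsum_comm hG
      _ = ∑' k, a k * (z ^ k - w ^ k) / (z - w) := tsum_congr hinner
      _ = ((∑' k, a k * z ^ k) - ∑' k, a k * w ^ k) / (z - w) := by
          rw [tsum_div_const]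
          congr 1
          have hsz : Summable fun k => a k * z ^ k := by
            apply Summable.of_norm
            apply Summable.of_nonneg_of_le (fun k => norm_nonneg _) _
              (ha.mul_of_nonneg (summable_geometric_of_lt_one hzn hz)
                (fun k => norm_nonneg _) (fun n => by positivity)
                |>.comp_injective (i := fun k : ℕ => (k, k)) (fun x y h => by simpa using h))
            intro k
            simp [norm_mul, norm_pow, le_refl]
          have hsw : Summable fun k => a k * w ^ k := by
            apply Summable.of_norm
            apply Summable.of_nonneg_of_le (fun k => norm_nonneg _) _
              (ha.mul_of_nonneg (summable_geometric_of_lt_one hwn hw)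
                (fun k => norm_nonneg _) (fun n => by positivity)
                |>.comp_injective (i := fun k : ℕ => (k, k)) (fun x y h => by simpa using h))
            intro k
            simp [norm_mul, norm_pow, le_refl]
          rw [← Summable.tsum_sub hsz hsw]
          refine tsum_congr fun k => ?_
          ring
  · -- the norm estimate
    calc ∑' n, ‖b n‖ ≤ ∑' n, ∑' k, ‖c k n‖ := Summable.tsum_le_tsum hbn hbsum hSumCol
      _ = ∑' k, ∑' n, ‖c k n‖ := by
          exact Summable.tsum_comm hF
      _ ≤ ∑' k, ‖a k‖ * (1 - ‖w‖)⁻¹ := by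
          refine Summable.tsum_le_tsum (fun k => ?_) ?_ (ha.mul_right _)
          · rw [hnormsum k]
            exact mul_le_mul_of_nonneg_left (hgeo k) (norm_nonneg _)
          · exact ((summable_prod_of_nonneg (fun p => norm_nonneg _)).mp hF).2
      _ = (∑' k, ‖a k‖) / (1 - ‖w‖) := by
          rw [tsum_mul_right, div_eq_mul_inv]
end

section
/- For any p ∈ (1,∞), f ∈ ℓ^p_A, and w ∈ D, the difference quotient Q_w f belongs to ℓ^p_A, and the operator Q_w is bounded on ℓ^p_A with operator norm at most (1 - |w|)^{-1}. -/
set_option maxHeartbeats 1000000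

open scoped ENNReal

private lemma rpow_one_div_self {x : ℝ} (hx : 0 ≤ x) {p : ℝ} (hp : 0 < p) :
    (x ^ p) ^ (1 / p) = x := by
  rw [← Real.rpow_mul hx, mul_one_div, div_self hp.ne', Real.rpow_one]

theorem ellpA_difference_quotient (p : ℝ) (hp : 1 < p)
    (a : ℕ → ℂ) (ha : Summable fun k => ‖a k‖ ^ p)
    (w : ℂ) (hw : ‖w‖ < 1) :
    ∃ b : ℕ → ℂ,
      (∀ z : ℂ, ‖z‖ < 1 → z ≠ w →
        ∑' n, b n * z ^ n = ((∑' k, a k * z ^ k) - ∑' k, a k * w ^ k) / (z - w)) ∧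
      Summable (fun n => ‖b n‖ ^ p) ∧
      (∑' n, ‖b n‖ ^ p) ^ (1/p) ≤ (∑' k, ‖a k‖ ^ p) ^ (1/p) / (1 - ‖w‖) := by
  have hp0 : (0:ℝ) < p := lt_trans one_pos hp
  set P : ℝ≥0∞ := ENNReal.ofReal p with hPdef
  have hPto : P.toReal = p := ENNReal.toReal_ofReal hp0.le
  have hPto0 : 0 < P.toReal := by rw [hPto]; exact hp0
  haveI : Fact (1 ≤ P) := ⟨by
    rw [hPdef, ← ENNReal.ofReal_one]; exact ENNReal.ofReal_le_ofReal hp.le⟩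
  set C : ℝ := (∑' k, ‖a k‖ ^ p) ^ (1/p) with hC
  have hC0 : 0 ≤ C := Real.rpow_nonneg (tsum_nonneg fun k => Real.rpow_nonneg (norm_nonneg _) p) _
  -- each term of a bounded by C
  have hCk : ∀ k, ‖a k‖ ≤ C := by
    intro k
    have h1 : ‖a k‖ ^ p ≤ ∑' k, ‖a k‖ ^ p :=
      Summable.le_tsum ha k fun j _ => Real.rpow_nonneg (norm_nonneg _) p
    calc ‖a k‖ = (‖a k‖ ^ p) ^ (1/p) := (rpow_one_div_self (norm_nonneg _) hp0).symm
      _ ≤ C := Real.rpow_le_rpow (Real.rpow_nonneg (norm_nonneg _) p) h1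
            (by positivity)
  -- tail summability
  have htail : ∀ j : ℕ, Summable fun n => ‖a (n + (j+1))‖ ^ p :=
    fun j => (summable_nat_add_iff (j+1)).2 ha
  have htail_le : ∀ j : ℕ, (∑' n, ‖a (n + (j+1))‖ ^ p) ≤ ∑' k, ‖a k‖ ^ p := by
    intro j
    refine (htail j).tsum_le_tsum_of_inj (fun n => n + (j+1)) (add_left_injective _)
      (fun i _ => Real.rpow_nonneg (norm_nonneg _) p) (fun n => le_rfl) ha
  -- the lp elements
  have hmem : ∀ j : ℕ, Memℓp (fun n => w ^ j * a (n + (j+1))) P := by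
    intro j
    apply memℓp_gen
    rw [hPto]
    have : (fun n => ‖w ^ j * a (n + (j+1))‖ ^ p)
        = fun n => (‖w‖ ^ j) ^ p * ‖a (n + (j+1))‖ ^ p := by
      funext n
      rw [norm_mul, norm_pow, Real.mul_rpow (by positivity) (norm_nonneg _)]
    rw [this]
    exact (htail j).mul_left _
  set c : ℕ → lp (fun _ : ℕ => ℂ) P := fun j => ⟨fun n => w ^ j * a (n + (j+1)), hmem j⟩ with hc
  have hcnorm : ∀ j, ‖c j‖ ≤ ‖w‖ ^ j * C := by
    intro j
    rw [lp.norm_eq_tsum_rpow hPto0, hPto]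
    have hrw : (fun n => ‖(c j : ℕ → ℂ) n‖ ^ p)
        = fun n => (‖w‖ ^ j) ^ p * ‖a (n + (j+1))‖ ^ p := by
      funext n
      show ‖w ^ j * a (n + (j+1))‖ ^ p = _
      rw [norm_mul, norm_pow, Real.mul_rpow (by positivity) (norm_nonneg _)]
    rw [hrw, tsum_mul_left]
    have h1 : ((‖w‖ ^ j) ^ p * ∑' n, ‖a (n + (j+1))‖ ^ p) ^ (1/p)
        ≤ ((‖w‖ ^ j) ^ p * ∑' k, ‖a k‖ ^ p) ^ (1/p) := by
      have hts : (0:ℝ) ≤ ∑' n, ‖a (n + (j+1))‖ ^ p :=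
        tsum_nonneg fun n => Real.rpow_nonneg (norm_nonneg _) p
      apply Real.rpow_le_rpow (mul_nonneg (by positivity) hts)
      · exact mul_le_mul_of_nonneg_left (htail_le j) (by positivity)
      · positivity
    refine h1.trans (le_of_eq ?_)
    rw [Real.mul_rpow (by positivity) (tsum_nonneg fun k => Real.rpow_nonneg (norm_nonneg _) p),
      rpow_one_div_self (by positivity) hp0, hC]
  have hgeom : Summable fun j : ℕ => ‖w‖ ^ j * C :=
    (summable_geometric_of_lt_one (norm_nonneg w) hw).mul_right C
  have hcsum : Summable c :=
    Summable.of_norm_bounded hgeom hcnorm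
  set B : lp (fun _ : ℕ => ℂ) P := ∑' j, c j with hB
  -- evaluation is pointwise
  have hP0 : P ≠ 0 := (ENNReal.ofReal_pos.2 hp0).ne'
  have heval : ∀ n, (B : ℕ → ℂ) n = ∑' j, w ^ j * a (n + (j+1)) := by
    intro n
    let evalL : lp (fun _ : ℕ => ℂ) P →ₗ[ℂ] ℂ :=
      { toFun := fun f => f n
        map_add' := fun f g => rfl
        map_smul' := fun m f => rfl }
    let evalCLM : lp (fun _ : ℕ => ℂ) P →L[ℂ] ℂ :=
      evalL.mkContinuous 1 (fun f => by
        show ‖(f : ℕ → ℂ) n‖ ≤ 1 * ‖f‖; simpa using lp.norm_apply_le_norm hP0 f n)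
    have h1 : evalCLM B = ∑' j, evalCLM (c j) := by
      rw [hB]; exact evalCLM.map_tsum hcsum
    exact h1
  set b : ℕ → ℂ := (B : ℕ → ℂ) with hbdef
  have hbsum : Summable fun n => ‖b n‖ ^ p := by
    have := (lp.memℓp B).summable hPto0
    rwa [hPto] at this
  have hbnorm : (∑' n, ‖b n‖ ^ p) ^ (1/p) ≤ C / (1 - ‖w‖) := by
    have h1 : (∑' n, ‖b n‖ ^ p) ^ (1/p) = ‖B‖ := by
      rw [lp.norm_eq_tsum_rpow hPto0, hPto]
    rw [h1, hB]
    have h2 : ‖∑' j, c j‖ ≤ ∑' j, ‖w‖ ^ j * C := by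
      refine (norm_tsum_le_tsum_norm ?_).trans (Summable.tsum_le_tsum hcnorm ?_ hgeom)
      · exact hgeom.of_nonneg_of_le (fun j => norm_nonneg _) hcnorm
      · exact hgeom.of_nonneg_of_le (fun j => norm_nonneg _) hcnorm
    refine h2.trans (le_of_eq ?_)
    rw [tsum_mul_right, tsum_geometric_of_lt_one (norm_nonneg w) hw,
      div_eq_mul_inv, mul_comm]
  refine ⟨b, ?_, hbsum, hbnorm⟩
  -- the analytic identity
  intro z hz hzw
  have hzw' : z - w ≠ 0 := sub_ne_zero.2 hzw
  -- summability of single series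
  have hsz : ∀ u : ℂ, ‖u‖ < 1 → Summable fun k => a k * u ^ k := by
    intro u hu
    refine Summable.of_norm_bounded (g := fun k => C * ‖u‖ ^ k)
      (((summable_geometric_of_lt_one (norm_nonneg u) hu).mul_left C)) ?_
    intro k
    rw [norm_mul, norm_pow]
    exact mul_le_mul_of_nonneg_right (hCk k) (by positivity)
  -- double series
  set F : ℕ × ℕ → ℂ := fun q => a (q.1 + (q.2 + 1)) * z ^ q.1 * w ^ q.2 with hF
  have hFsum : Summable F := by
    refine Summable.of_norm_bounded (g := fun q : ℕ × ℕ => C * (‖z‖ ^ q.1 * ‖w‖ ^ q.2)) ?_ ?_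
    · exact ((summable_geometric_of_lt_one (norm_nonneg z) hz).mul_of_nonneg
        (summable_geometric_of_lt_one (norm_nonneg w) hw)
        (fun n => by positivity) (fun n => by positivity)).mul_left C
    · intro q
      rw [hF]
      simp only [norm_mul, norm_pow]
      calc ‖a (q.1 + (q.2+1))‖ * ‖z‖ ^ q.1 * ‖w‖ ^ q.2
          ≤ C * ‖z‖ ^ q.1 * ‖w‖ ^ q.2 := by
            have := hCk (q.1 + (q.2+1)); gcongr
        _ = C * (‖z‖ ^ q.1 * ‖w‖ ^ q.2) := by ring
  -- step 1 : ∑' n, b n * z^n = ∑' q, F q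
  have hstep1 : ∑' n, b n * z ^ n = ∑' q, F q := by
    rw [Summable.tsum_prod' hFsum ?_]
    · refine tsum_congr fun n => ?_
      rw [heval n]
      rw [← tsum_mul_right]
      refine tsum_congr fun j => ?_
      rw [hF]; ring
    · intro n
      have : (fun j => F (n, j)) = fun j => (a (n + (j+1)) * z ^ n) * w ^ j := by
        funext j; rw [hF]
      rw [this]
      refine Summable.of_norm_bounded (g := fun j => (C * ‖z‖ ^ n) * ‖w‖ ^ j)
        ((summable_geometric_of_lt_one (norm_nonneg w) hw).mul_left _) ?_
      intro j
      simp only [norm_mul, norm_pow]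
      have := hCk (n + (j+1)); gcongr
  -- step 2 : group by antidiagonal
  have hstep2 : ∑' q, F q = ∑' n, a (n+1) * ∑ q ∈ Finset.HasAntidiagonal.antidiagonal n, z ^ q.1 * w ^ q.2 := by
    have e := Finset.HasAntidiagonal.sigmaAntidiagonalEquivProd (A := ℕ)
    calc ∑' q, F q
        = ∑' x : Σ n : ℕ, {q // q ∈ Finset.HasAntidiagonal.antidiagonal n},
            (F ∘ Finset.HasAntidiagonal.sigmaAntidiagonalEquivProd) x :=
          (Finset.HasAntidiagonal.sigmaAntidiagonalEquivProd.tsum_eq F).symm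
      _ = ∑' (n : ℕ), ∑' (q : {q // q ∈ Finset.HasAntidiagonal.antidiagonal n}),
            (F ∘ Finset.HasAntidiagonal.sigmaAntidiagonalEquivProd) ⟨n, q⟩ :=
          Summable.tsum_sigma (Finset.HasAntidiagonal.sigmaAntidiagonalEquivProd.summable_iff.2 hFsum)
      _ = ∑' n, a (n+1) * ∑ q ∈ Finset.HasAntidiagonal.antidiagonal n, z ^ q.1 * w ^ q.2 := ?_
    refine tsum_congr fun n => ?_
    have h0 : ∑' (q : {q // q ∈ Finset.HasAntidiagonal.antidiagonal n}),
        (F ∘ Finset.HasAntidiagonal.sigmaAntidiagonalEquivProd) ⟨n, q⟩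
        = ∑ q ∈ Finset.HasAntidiagonal.antidiagonal n, F q :=
      Finset.tsum_subtype (Finset.HasAntidiagonal.antidiagonal n) F
    rw [h0, Finset.mul_sum]
    refine Finset.sum_congr rfl fun q hq => ?_
    rw [Finset.HasAntidiagonal.mem_antidiagonal] at hq
    rw [hF]
    simp only
    rw [show q.1 + (q.2 + 1) = n + 1 by omega]
    ring
  -- step 3 : multiply by (z - w)
  have hgeom2 : ∀ n : ℕ, (∑ q ∈ Finset.HasAntidiagonal.antidiagonal n, z ^ q.1 * w ^ q.2) * (z - w)
      = z ^ (n+1) - w ^ (n+1) := by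
    intro n
    rw [Finset.Nat.sum_antidiagonal_eq_sum_range_succ_mk]
    have := geom_sum₂_mul z w (n+1)
    simpa using this
  -- RHS computation
  have hsum_z := hsz z hz
  have hsum_w := hsz w hw
  have hsub : Summable fun k => a k * z ^ k - a k * w ^ k := hsum_z.sub hsum_w
  have hRHS : (∑' k, a k * z ^ k) - ∑' k, a k * w ^ k
      = ∑' n, (a (n+1) * z ^ (n+1) - a (n+1) * w ^ (n+1)) := by
    rw [← Summable.tsum_sub hsum_z hsum_w]
    rw [Summable.tsum_eq_zero_add hsub]
    simp
  -- combine
  rw [eq_div_iff hzw', hstep1, hstep2, ← tsum_mul_right]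
  rw [hRHS]
  refine tsum_congr fun n => ?_
  rw [mul_assoc, hgeom2 n]
  ring
end

section
/- For p ∈ (1,2] and vectors x, y in ℓ^p with x ⊥_p y (Birkhoff–James orthogonal, i.e., ‖x + βy‖_p ≥ ‖x‖_p for every scalar β), we have ‖x + y‖_p^2 ≥ ‖x‖_p^2 + (p-1)‖y‖_p^2. -/
open Real Set Filter

/-- The `ℓ^p` norm of a coefficient sequence. -/
noncomputable def pnorm (p : ℝ) (a : ℕ → ℂ) : ℝ := (∑' k, ‖a k‖ ^ p) ^ (1/p)

lemma aux_conv {s r : ℝ} (hs : s ≤ 0) (hr0 : 0 < r) (hr1 : r < 1) :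
    2 ≤ (1+r) ^ s + (1-r) ^ s := by
  have h1 : (0:ℝ) < 1 + r := by linarith
  have h2 : (0:ℝ) < 1 - r := by linarith
  have hab : 1 ≤ ((1+r) ^ s) * ((1-r) ^ s) := by
    rw [← Real.mul_rpow h1.le h2.le]
    have hle : (1+r) * (1-r) ≤ 1 := by nlinarith
    have hpos : 0 < (1+r)*(1-r) := mul_pos h1 h2
    calc (1:ℝ) = 1 ^ s := (Real.one_rpow s).symm
      _ ≤ ((1+r)*(1-r)) ^ s := Real.rpow_le_rpow_of_nonpos hpos hle hs
  have ha : 0 < (1+r) ^ s := Real.rpow_pos_of_pos h1 s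
  have hb : 0 < (1-r) ^ s := Real.rpow_pos_of_pos h2 s
  nlinarith [sq_nonneg ((1+r)^s - (1-r)^s)]

lemma series_ineq {p : ℝ} (hp1 : 1 < p) (hp2 : p ≤ 2) {r : ℝ} (hr0 : 0 ≤ r) (hr1 : r ≤ 1) :
    2 + p * (p-1) * r^2 ≤ (1+r) ^ p + (1-r) ^ p := by
  have hp0 : (0:ℝ) < p := by linarith
  set g : ℝ → ℝ := fun r => (1+r) ^ p + (1-r) ^ p - (2 + p*(p-1)*r^2) with hgdef
  set G : ℝ → ℝ := fun r => p*(1+r)^(p-1) - p*(1-r)^(p-1) - 2*p*(p-1)*r with hGdef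
  have hG : ∀ t ∈ Ioo (-1:ℝ) 1, HasDerivAt g (G t) t := by
    intro t ht
    have h1 : (0:ℝ) < 1 + t := by linarith [ht.1]
    have h2 : (0:ℝ) < 1 - t := by linarith [ht.2]
    have d1 : HasDerivAt (fun x : ℝ => (1+x) ^ p) (1 * p * (1+t)^(p-1)) t :=
      ((hasDerivAt_id t).const_add 1).rpow_const (Or.inl h1.ne')
    have d2 : HasDerivAt (fun x : ℝ => (1-x) ^ p) ((-1) * p * (1-t)^(p-1)) t :=
      ((hasDerivAt_id t).const_sub 1).rpow_const (Or.inl h2.ne')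
    have d3 : HasDerivAt (fun x : ℝ => 2 + p*(p-1)*x^2) (p*(p-1)*(2*t^1)) t :=
      (((hasDerivAt_pow 2 t)).const_mul (p*(p-1))).const_add 2
    have := (d1.add d2).sub d3
    refine this.congr_deriv ?_
    simp only [hGdef]
    ring
  have hG' : ∀ t ∈ Ioo (-1:ℝ) 1, HasDerivAt G
      (p*(p-1)*((1+t)^(p-2)) + p*(p-1)*((1-t)^(p-2)) - 2*p*(p-1)) t := by
    intro t ht
    have h1 : (0:ℝ) < 1 + t := by linarith [ht.1]
    have h2 : (0:ℝ) < 1 - t := by linarith [ht.2]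
    have d1 : HasDerivAt (fun x : ℝ => (1+x) ^ (p-1)) (1 * (p-1) * (1+t)^(p-1-1)) t :=
      ((hasDerivAt_id t).const_add 1).rpow_const (Or.inl h1.ne')
    have d2 : HasDerivAt (fun x : ℝ => (1-x) ^ (p-1)) ((-1) * (p-1) * (1-t)^(p-1-1)) t :=
      ((hasDerivAt_id t).const_sub 1).rpow_const (Or.inl h2.ne')
    have d3 : HasDerivAt (fun x : ℝ => 2*p*(p-1)*x) (2*p*(p-1)*1) t :=
      (hasDerivAt_id t).const_mul (2*p*(p-1))
    have := ((d1.const_mul p).sub (d2.const_mul p)).sub d3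
    refine this.congr_deriv ?_
    have hpe : p - 1 - 1 = p - 2 := by ring
    rw [hpe]; ring
  have hGmono : MonotoneOn G (Ico (0:ℝ) 1) := by
    apply monotoneOn_of_deriv_nonneg (convex_Ico 0 1)
    · intro t ht
      exact ((hG' t ⟨by linarith [ht.1], ht.2⟩).continuousAt).continuousWithinAt
    · rw [interior_Ico]; intro t ht
      exact ((hG' t ⟨by linarith [ht.1], ht.2⟩)).differentiableAt.differentiableWithinAt
    · rw [interior_Ico]; intro t ht
      rw [(hG' t ⟨by linarith [ht.1], ht.2⟩).deriv]
      have h2 := aux_conv (s := p-2) (by linarith) ht.1 ht.2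
      nlinarith [mul_pos hp0 (show (0:ℝ) < p - 1 by linarith)]
  have hGnn : ∀ t ∈ Ico (0:ℝ) 1, 0 ≤ G t := by
    intro t ht
    have h0 : G 0 = 0 := by simp [hGdef]
    have := hGmono (left_mem_Ico.2 one_pos) ht ht.1
    rwa [h0] at this
  have hgmono : MonotoneOn g (Icc (0:ℝ) 1) := by
    apply monotoneOn_of_deriv_nonneg (convex_Icc 0 1)
    · apply ContinuousOn.sub
      · apply ContinuousOn.add
        · exact (continuousOn_const.add continuousOn_id).rpow_const
            (fun x hx => Or.inr hp0.le)
        · exact (continuousOn_const.sub continuousOn_id).rpow_const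
            (fun x hx => Or.inr hp0.le)
      · fun_prop
    · rw [interior_Icc]; intro t ht
      exact ((hG t ⟨by linarith [ht.1], ht.2⟩)).differentiableAt.differentiableWithinAt
    · rw [interior_Icc]; intro t ht
      rw [(hG t ⟨by linarith [ht.1], ht.2⟩).deriv]
      exact hGnn t ⟨ht.1.le, ht.2⟩
  have h0 : g 0 = 0 := by simp [hgdef]; norm_num
  have := hgmono (left_mem_Icc.2 zero_le_one) ⟨hr0, hr1⟩ hr0
  rw [h0] at this
  simpa [hgdef] using this

lemma sq_rpow_half {p x : ℝ} (hx : 0 ≤ x) : (x^2) ^ (p/2) = x ^ p := by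
  rw [← Real.rpow_natCast x 2, ← Real.rpow_mul hx]
  congr 1
  push_cast
  ring

lemma two_point_real {p : ℝ} (hp1 : 1 < p) (hp2 : p ≤ 2) {α β : ℝ}
    (hβ : 0 ≤ β) (hβα : β ≤ α) :
    (α^2 + (p-1)*β^2) ^ (p/2) ≤ (((α+β)^2) ^ (p/2) + ((α-β)^2) ^ (p/2)) / 2 := by
  have hα : 0 ≤ α := hβ.trans hβα
  rcases eq_or_lt_of_le hα with h0 | hαpos
  · have hβ0 : β = 0 := le_antisymm (by linarith) hβ
    rw [hβ0, ← h0]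
    simp [Real.zero_rpow (show p/2 ≠ 0 by positivity)]
  · set r := β / α with hrdef
    have hr0 : 0 ≤ r := by positivity
    have hr1 : r ≤ 1 := div_le_one_of_le₀ hβα hα
    have hb : β = r * α := by rw [hrdef, div_mul_cancel₀ β hαpos.ne']
    have hq0 : (0:ℝ) ≤ p/2 := by linarith
    have hq1 : p/2 ≤ 1 := by linarith
    have e1 : α^2 + (p-1)*β^2 = α^2 * (1 + (p-1)*r^2) := by rw [hb]; ring
    have e2 : (α^2 + (p-1)*β^2) ^ (p/2) = α^p * (1 + (p-1)*r^2)^(p/2) := by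
      rw [e1, Real.mul_rpow (by positivity) (by nlinarith), sq_rpow_half hα]
    have e3 : ((α+β)^2) ^ (p/2) = α^p * ((1+r)^2) ^ (p/2) := by
      have h : (α+β)^2 = α^2 * (1+r)^2 := by rw [hb]; ring
      rw [h, Real.mul_rpow (by positivity) (by positivity), sq_rpow_half hα]
    have e4 : ((α-β)^2) ^ (p/2) = α^p * ((1-r)^2) ^ (p/2) := by
      have h : (α-β)^2 = α^2 * (1-r)^2 := by rw [hb]; ring
      rw [h, Real.mul_rpow (by positivity) (by positivity), sq_rpow_half hα]
    have e5 : ((1+r)^2) ^ (p/2) = (1+r)^p := sq_rpow_half (by linarith)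
    have e6 : ((1-r)^2) ^ (p/2) = (1-r)^p := sq_rpow_half (by linarith)
    have bern : (1 + (p-1)*r^2)^(p/2) ≤ 1 + (p/2)*((p-1)*r^2) :=
      rpow_one_add_le_one_add_mul_self (by nlinarith) hq0 hq1
    have ser := series_ineq hp1 hp2 hr0 hr1
    have hc : (1 + (p-1)*r^2)^(p/2) ≤ ((1+r)^p + (1-r)^p) / 2 := by
      calc (1 + (p-1)*r^2)^(p/2) ≤ 1 + (p/2)*((p-1)*r^2) := bern
        _ = (2 + p*(p-1)*r^2) / 2 := by ring
        _ ≤ ((1+r)^p + (1-r)^p) / 2 := by linarith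
    rw [e2, e3, e4, e5, e6]
    have hap : 0 ≤ α ^ p := Real.rpow_nonneg hα p
    calc α^p * (1 + (p-1)*r^2)^(p/2) ≤ α^p * (((1+r)^p + (1-r)^p)/2) :=
          mul_le_mul_of_nonneg_left hc hap
      _ = (α^p * (1+r)^p + α^p * (1-r)^p) / 2 := by ring

lemma two_point_real' {p : ℝ} (hp1 : 1 < p) (hp2 : p ≤ 2) {α β : ℝ}
    (hα0 : 0 ≤ α) (hβ0 : 0 ≤ β) :
    (α^2 + (p-1)*β^2) ^ (p/2) ≤ (((α+β)^2) ^ (p/2) + ((α-β)^2) ^ (p/2)) / 2 := by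
  have hq0 : (0:ℝ) ≤ p/2 := by linarith
  rcases le_total β α with hba | hab2
  · exact two_point_real hp1 hp2 hβ0 hba
  · have h := two_point_real hp1 hp2 hα0 hab2
    have hsq : α^2 ≤ β^2 := pow_le_pow_left₀ hα0 hab2 2
    have hprod : 0 ≤ (β^2 - α^2) * (2 - p) := mul_nonneg (by linarith) (by linarith)
    have hn1 : 0 ≤ p - 1 := by linarith
    have hmono : (α^2 + (p-1)*β^2) ^ (p/2) ≤ (β^2 + (p-1)*α^2) ^ (p/2) := by
      apply Real.rpow_le_rpow
        (by nlinarith [mul_nonneg hn1 (sq_nonneg β), sq_nonneg α]) (by nlinarith [hprod]) hq0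
    calc (α^2 + (p-1)*β^2) ^ (p/2) ≤ (β^2 + (p-1)*α^2) ^ (p/2) := hmono
      _ ≤ (((β+α)^2)^(p/2) + ((β-α)^2)^(p/2)) / 2 := h
      _ = (((α+β)^2)^(p/2) + ((α-β)^2)^(p/2)) / 2 := by
          rw [show β+α = α+β from by ring, show (β-α)^2 = (α-β)^2 from by ring]

lemma two_point_complex {p : ℝ} (hp1 : 1 < p) (hp2 : p ≤ 2) (a b : ℂ) :
    (‖a‖^2 + (p-1)*‖b‖^2) ^ (p/2) ≤ (‖a+b‖^p + ‖a-b‖^p) / 2 := by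
  have hq0 : (0:ℝ) ≤ p/2 := by linarith
  have hq1 : p/2 ≤ 1 := by linarith
  set α := ‖a‖ with hA
  set β := ‖b‖ with hB
  have hα0 : 0 ≤ α := norm_nonneg a
  have hβ0 : 0 ≤ β := norm_nonneg b
  set c := (a * (starRingEnd ℂ) b).re with hc
  have habs : |c| ≤ α * β := by
    calc |c| ≤ ‖a * (starRingEnd ℂ) b‖ := Complex.abs_re_le_norm _
      _ = α * β := by rw [norm_mul, Complex.norm_conj]
  have hadd : ‖a+b‖^2 = α^2 + β^2 + 2*c := by
    rw [hA, hB,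
      Complex.sq_norm, Complex.sq_norm, Complex.sq_norm, Complex.normSq_add]
  have hsub : ‖a-b‖^2 = α^2 + β^2 - 2*c := by
    rw [hA, hB,
      Complex.sq_norm, Complex.sq_norm, Complex.sq_norm, sub_eq_add_neg, Complex.normSq_add]
    simp only [map_neg, mul_neg, Complex.neg_re, Complex.normSq_neg]
    ring
  set s : ℝ := α^2 + β^2 with hs
  set m : ℝ := α * β with hm
  have hm0 : 0 ≤ m := mul_nonneg hα0 hβ0
  have hs2m : 0 ≤ s - 2*m := by nlinarith [sq_nonneg (α - β)]
  have hs2m' : 0 ≤ s + 2*m := by nlinarith [sq_nonneg (α + β)]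
  -- step 1 : concavity
  have key : (s+2*m)^(p/2) + (s-2*m)^(p/2) ≤ (s+2*c)^(p/2) + (s-2*c)^(p/2) := by
    rcases eq_or_lt_of_le hm0 with hm0' | hmpos
    · have hcle : |c| ≤ 0 := by linarith [habs]
      have hc0 : c = 0 := abs_eq_zero.mp (le_antisymm hcle (abs_nonneg c))
      rw [hc0, ← hm0']
    · set lam : ℝ := (m + c) / (2*m) with hlam
      have hcm := abs_le.mp habs
      have hlam0 : 0 ≤ lam := by
        apply div_nonneg (by linarith [hcm.1]) (by linarith)
      have hlam1 : lam ≤ 1 := by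
        rw [div_le_one (by linarith)]
        linarith [hcm.2]
      have hconc := Real.concaveOn_rpow hq0 hq1
      have h1 := hconc.2 (mem_Ici.mpr hs2m') (mem_Ici.mpr hs2m)
        hlam0 (by linarith : (0:ℝ) ≤ 1 - lam) (by ring)
      have h2 := hconc.2 (mem_Ici.mpr hs2m) (mem_Ici.mpr hs2m')
        hlam0 (by linarith : (0:ℝ) ≤ 1 - lam) (by ring)
      have e1 : lam • (s+2*m) + (1-lam) • (s-2*m) = s + 2*c := by
        simp only [smul_eq_mul, hlam]
        field_simp
        ring
      have e2 : lam • (s-2*m) + (1-lam) • (s+2*m) = s - 2*c := by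
        simp only [smul_eq_mul, hlam]
        field_simp
        ring
      rw [e1] at h1
      rw [e2] at h2
      simp only [smul_eq_mul] at h1 h2
      nlinarith [h1, h2]
  -- rewrite norms
  have hab : ‖a+b‖^p = (s+2*c)^(p/2) := by
    rw [← hadd, sq_rpow_half (norm_nonneg _)]
  have hab' : ‖a-b‖^p = (s-2*c)^(p/2) := by
    rw [show s - 2*c = ‖a-b‖^2 from hsub.symm, sq_rpow_half (norm_nonneg _)]
  have hsm1 : s + 2*m = (α+β)^2 := by rw [hs, hm]; ring
  have hsm2 : s - 2*m = (α-β)^2 := by rw [hs, hm]; ring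
  have main := two_point_real' hp1 hp2 hα0 hβ0
  calc (α^2 + (p-1)*β^2) ^ (p/2)
      ≤ (((α+β)^2)^(p/2) + ((α-β)^2)^(p/2)) / 2 := main
    _ = ((s+2*m)^(p/2) + (s-2*m)^(p/2)) / 2 := by rw [hsm1, hsm2]
    _ ≤ ((s+2*c)^(p/2) + (s-2*c)^(p/2)) / 2 := by linarith [key]
    _ = (‖a+b‖^p + ‖a-b‖^p) / 2 := by rw [hab, hab']

lemma tsum_norm_rpow_nonneg (p : ℝ) (a : ℕ → ℂ) : 0 ≤ ∑' k, ‖a k‖ ^ p :=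
  tsum_nonneg fun k => Real.rpow_nonneg (norm_nonneg _) p

lemma pnorm_nonneg (p : ℝ) (a : ℕ → ℂ) : 0 ≤ pnorm p a :=
  Real.rpow_nonneg (tsum_norm_rpow_nonneg p a) _

lemma pnorm_sq {p : ℝ} (hp : 0 < p) (a : ℕ → ℂ) :
    pnorm p a ^ 2 = (∑' k, ‖a k‖ ^ p) ^ (2/p) := by
  rw [pnorm, ← Real.rpow_natCast ((∑' k, ‖a k‖ ^ p) ^ (1/p)) 2,
    ← Real.rpow_mul (tsum_norm_rpow_nonneg p a)]
  congr 1
  push_cast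
  field_simp

lemma rpow_subadd {q x y : ℝ} (hq0 : 0 ≤ q) (hq1 : q ≤ 1) (hx : 0 ≤ x) (hy : 0 ≤ y) :
    (x+y)^q ≤ x^q + y^q := by
  have h := NNReal.rpow_add_le_add_rpow x.toNNReal y.toNNReal hq0 hq1
  rw [← NNReal.coe_le_coe] at h
  simp only [NNReal.coe_rpow, NNReal.coe_add, Real.coe_toNNReal _ hx,
    Real.coe_toNNReal _ hy] at h
  exact h

lemma conc_split {q lam u v : ℝ} (hq0 : 0 ≤ q) (hq1 : q ≤ 1) (hl0 : 0 < lam)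
    (hl1 : lam < 1) (hu : 0 ≤ u) (hv : 0 ≤ v) :
    lam^(1-q) * u^q + (1-lam)^(1-q) * v^q ≤ (u+v)^q := by
  have hconc := Real.concaveOn_rpow hq0 hq1
  have h := hconc.2 (mem_Ici.mpr (show (0:ℝ) ≤ u/lam by positivity))
    (mem_Ici.mpr (show (0:ℝ) ≤ v/(1-lam) by
      apply div_nonneg hv; linarith))
    hl0.le (by linarith : (0:ℝ) ≤ 1-lam) (by ring)
  have h1l : (0:ℝ) < 1 - lam := by linarith
  have e : lam • (u/lam) + (1-lam) • (v/(1-lam)) = u + v := by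
    simp only [smul_eq_mul]
    field_simp
  rw [e] at h
  simp only [smul_eq_mul] at h
  have e1 : lam * (u/lam)^q = lam^(1-q) * u^q := by
    rw [Real.div_rpow hu hl0.le, Real.rpow_sub hl0, Real.rpow_one]
    field_simp
  have e2 : (1-lam) * (v/(1-lam))^q = (1-lam)^(1-q) * v^q := by
    rw [Real.div_rpow hv h1l.le, Real.rpow_sub h1l, Real.rpow_one]
    field_simp
  rw [e1, e2] at h
  exact h

lemma rev_mink {q : ℝ} (hq0 : 0 < q) (hq1 : q ≤ 1) {u v : ℕ → ℝ}
    (hu0 : ∀ k, 0 ≤ u k) (hv0 : ∀ k, 0 ≤ v k)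
    (hu : Summable fun k => u k ^ q) (hv : Summable fun k => v k ^ q) :
    (∑' k, u k ^ q) ^ (1/q) + (∑' k, v k ^ q) ^ (1/q)
      ≤ (∑' k, (u k + v k) ^ q) ^ (1/q) := by
  have huv : Summable fun k => (u k + v k) ^ q :=
    Summable.of_nonneg_of_le (fun k => Real.rpow_nonneg (add_nonneg (hu0 k) (hv0 k)) q)
      (fun k => rpow_subadd hq0.le hq1 (hu0 k) (hv0 k)) (hu.add hv)
  set Su := ∑' k, u k ^ q with hSu
  set Sv := ∑' k, v k ^ q with hSv
  have hSu0 : 0 ≤ Su := tsum_nonneg fun k => Real.rpow_nonneg (hu0 k) q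
  have hSv0 : 0 ≤ Sv := tsum_nonneg fun k => Real.rpow_nonneg (hv0 k) q
  have hmono_uv : ∀ w : ℕ → ℝ, (∀ k, 0 ≤ w k) → (∀ k, w k ≤ u k + v k) →
      Summable (fun k => w k ^ q) → (∑' k, w k ^ q) ≤ ∑' k, (u k + v k) ^ q := by
    intro w hw0 hwle hws
    exact Summable.tsum_le_tsum (fun k => Real.rpow_le_rpow (hw0 k) (hwle k) hq0.le) hws huv
  rcases eq_or_lt_of_le hSu0 with hSu0' | hSupos
  · rw [← hSu0', Real.zero_rpow (by positivity), zero_add]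
    apply Real.rpow_le_rpow hSv0 _ (by positivity)
    exact hmono_uv v hv0 (fun k => le_add_of_nonneg_left (hu0 k)) hv
  rcases eq_or_lt_of_le hSv0 with hSv0' | hSvpos
  · rw [← hSv0', Real.zero_rpow (by positivity), add_zero]
    apply Real.rpow_le_rpow hSu0 _ (by positivity)
    exact hmono_uv u hu0 (fun k => le_add_of_nonneg_right (hv0 k)) hu
  set U := Su ^ (1/q) with hU
  set V := Sv ^ (1/q) with hV
  have hUpos : 0 < U := Real.rpow_pos_of_pos hSupos _
  have hVpos : 0 < V := Real.rpow_pos_of_pos hSvpos _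
  set lam := U / (U + V) with hlam
  have hUV : 0 < U + V := by linarith
  have hl0 : 0 < lam := by positivity
  have hl1 : lam < 1 := by
    rw [hlam, div_lt_one hUV]; linarith
  have hUq : U ^ q = Su := by
    rw [hU, one_div, Real.rpow_inv_rpow hSu0 hq0.ne']
  have hVq : V ^ q = Sv := by
    rw [hV, one_div, Real.rpow_inv_rpow hSv0 hq0.ne']
  have hpt : ∀ k, lam^(1-q) * u k ^ q + (1-lam)^(1-q) * v k ^ q ≤ (u k + v k)^q :=
    fun k => conc_split hq0.le hq1 hl0 hl1 (hu0 k) (hv0 k)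
  have hsum : lam^(1-q) * Su + (1-lam)^(1-q) * Sv ≤ ∑' k, (u k + v k)^q := by
    have := Summable.tsum_le_tsum hpt (((hu.mul_left _)).add ((hv.mul_left _))) huv
    calc lam^(1-q) * Su + (1-lam)^(1-q) * Sv
        = ∑' k, (lam^(1-q) * u k ^ q + (1-lam)^(1-q) * v k ^ q) := by
          rw [Summable.tsum_add (hu.mul_left _) (hv.mul_left _), tsum_mul_left, tsum_mul_left]
      _ ≤ _ := this
  have hkey : (U+V)^q ≤ ∑' k, (u k + v k)^q := by
    have h1ml : 1 - lam = V / (U+V) := by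
      rw [hlam]; field_simp; ring
    have eU : lam^(1-q) * Su = U * (U+V)^(q-1) := by
      rw [← hUq, hlam, Real.div_rpow hUpos.le hUV.le, div_mul_eq_mul_div,
        ← Real.rpow_add hUpos, sub_add_cancel, Real.rpow_one, div_eq_mul_inv,
        ← Real.rpow_neg hUV.le, neg_sub]
    have eV : (1-lam)^(1-q) * Sv = V * (U+V)^(q-1) := by
      rw [← hVq, h1ml, Real.div_rpow hVpos.le hUV.le, div_mul_eq_mul_div,
        ← Real.rpow_add hVpos, sub_add_cancel, Real.rpow_one, div_eq_mul_inv,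
        ← Real.rpow_neg hUV.le, neg_sub]
    have efin : (U+V) * (U+V)^(q-1) = (U+V)^q := by
      nth_rewrite 1 [← Real.rpow_one (U+V)]
      rw [← Real.rpow_add hUV, show (1:ℝ)+(q-1) = q by ring]
    have e : lam^(1-q) * Su + (1-lam)^(1-q) * Sv = (U+V)^q := by
      rw [eU, eV, ← add_mul, efin]
    rw [← e]; exact hsum
  calc U + V = ((U+V)^q)^(1/q) := by
        rw [one_div, Real.rpow_rpow_inv hUV.le hq0.ne']
    _ ≤ (∑' k, (u k + v k)^q)^(1/q) :=
        Real.rpow_le_rpow (Real.rpow_nonneg hUV.le q) hkey (by positivity)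

lemma summable_rpow_bound {p : ℝ} (hp0 : 0 < p) {x y f : ℕ → ℂ}
    (hx : Summable fun k => ‖x k‖ ^ p) (hy : Summable fun k => ‖y k‖ ^ p)
    (hf : ∀ k, ‖f k‖ ≤ ‖x k‖ + ‖y k‖) :
    Summable fun k => ‖f k‖ ^ p := by
  have hbd : ∀ k, ‖f k‖ ^ p ≤ (2:ℝ)^p * (‖x k‖^p + ‖y k‖^p) := by
    intro k
    have h1 : ‖f k‖ ≤ 2 * max ‖x k‖ ‖y k‖ := by
      rcases max_cases ‖x k‖ ‖y k‖ with ⟨h, h'⟩ | ⟨h, h'⟩ <;>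
        [skip; skip] <;> rw [h] <;> linarith [hf k]
    calc ‖f k‖ ^ p ≤ (2 * max ‖x k‖ ‖y k‖) ^ p :=
          Real.rpow_le_rpow (norm_nonneg _) h1 hp0.le
      _ = 2^p * (max ‖x k‖ ‖y k‖)^p := by
          rw [Real.mul_rpow (by norm_num) (le_max_of_le_left (norm_nonneg _))]
      _ ≤ 2^p * (‖x k‖^p + ‖y k‖^p) := by
          apply mul_le_mul_of_nonneg_left _ (Real.rpow_nonneg (by norm_num) p)
          rcases max_cases ‖x k‖ ‖y k‖ with ⟨h, _⟩ | ⟨h, _⟩ <;> rw [h]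
          · exact le_add_of_nonneg_right (Real.rpow_nonneg (norm_nonneg _) p)
          · exact le_add_of_nonneg_left (Real.rpow_nonneg (norm_nonneg _) p)
  exact Summable.of_nonneg_of_le (fun k => Real.rpow_nonneg (norm_nonneg _) p)
    hbd ((hx.add hy).mul_left _)

lemma bcl {p : ℝ} (hp1 : 1 < p) (hp2 : p ≤ 2) (a b : ℕ → ℂ)
    (ha : Summable fun k => ‖a k‖ ^ p) (hb : Summable fun k => ‖b k‖ ^ p) :
    pnorm p a ^ 2 + (p-1) * pnorm p b ^ 2 ≤
      (pnorm p (fun k => a k + b k) ^ 2 + pnorm p (fun k => a k - b k) ^ 2) / 2 := by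
  have hp0 : (0:ℝ) < p := by linarith
  have hq0 : (0:ℝ) < p/2 := by linarith
  have hq1 : p/2 ≤ 1 := by linarith
  have hinv : 1/(p/2) = 2/p := by field_simp
  set u : ℕ → ℝ := fun k => ‖a k‖^2 with hu
  set v : ℕ → ℝ := fun k => (p-1) * ‖b k‖^2 with hv
  have hu0 : ∀ k, 0 ≤ u k := fun k => sq_nonneg _
  have hv0 : ∀ k, 0 ≤ v k := fun k => mul_nonneg (by linarith) (sq_nonneg _)
  have huq : ∀ k, u k ^ (p/2) = ‖a k‖ ^ p := fun k => sq_rpow_half (norm_nonneg _)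
  have hvq : ∀ k, v k ^ (p/2) = (p-1)^(p/2) * ‖b k‖ ^ p := by
    intro k
    rw [hv, Real.mul_rpow (by linarith) (sq_nonneg _), sq_rpow_half (norm_nonneg _)]
  have hus : Summable fun k => u k ^ (p/2) := by
    simpa only [huq] using ha
  have hvs : Summable fun k => v k ^ (p/2) := by
    simp only [hvq]
    exact hb.mul_left _
  have hmink := rev_mink hq0 hq1 hu0 hv0 hus hvs
  -- identify left side
  have eU : (∑' k, u k ^ (p/2)) ^ (1/(p/2)) = pnorm p a ^ 2 := by
    rw [pnorm_sq hp0, hinv]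
    congr 1
    exact tsum_congr huq
  have eV : (∑' k, v k ^ (p/2)) ^ (1/(p/2)) = (p-1) * pnorm p b ^ 2 := by
    rw [hinv, pnorm_sq hp0]
    have : (∑' k, v k ^ (p/2)) = (p-1)^(p/2) * ∑' k, ‖b k‖ ^ p := by
      rw [tsum_congr hvq, tsum_mul_left]
    rw [this, Real.mul_rpow (Real.rpow_nonneg (by linarith) _)
      (tsum_norm_rpow_nonneg p b), ← Real.rpow_mul (by linarith : (0:ℝ) ≤ p-1)]
    congr 2
    field_simp
    exact Real.rpow_one _
  rw [eU, eV] at hmink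
  -- pointwise complex inequality
  have hcs : Summable fun k => ‖a k + b k‖ ^ p :=
    summable_rpow_bound hp0 ha hb (fun k => norm_add_le _ _)
  have hds : Summable fun k => ‖a k - b k‖ ^ p :=
    summable_rpow_bound hp0 ha hb (fun k => norm_sub_le _ _)
  have huvs : Summable fun k => (u k + v k) ^ (p/2) :=
    Summable.of_nonneg_of_le
      (fun k => Real.rpow_nonneg (add_nonneg (hu0 k) (hv0 k)) _)
      (fun k => rpow_subadd hq0.le hq1 (hu0 k) (hv0 k)) (hus.add hvs)
  have hpt : ∀ k, (u k + v k) ^ (p/2) ≤ (‖a k + b k‖^p + ‖a k - b k‖^p)/2 :=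
    fun k => two_point_complex hp1 hp2 (a k) (b k)
  have hsum : (∑' k, (u k + v k) ^ (p/2)) ≤
      ((∑' k, ‖a k + b k‖^p) + (∑' k, ‖a k - b k‖^p))/2 := by
    have := Summable.tsum_le_tsum hpt huvs ((hcs.add hds).div_const 2)
    calc (∑' k, (u k + v k) ^ (p/2))
        ≤ ∑' k, (‖a k + b k‖^p + ‖a k - b k‖^p)/2 := this
      _ = ((∑' k, ‖a k + b k‖^p) + (∑' k, ‖a k - b k‖^p))/2 := by
          rw [tsum_div_const, Summable.tsum_add hcs hds]
  set Sc := ∑' k, ‖a k + b k‖^p with hSc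
  set Sd := ∑' k, ‖a k - b k‖^p with hSd
  have hSc0 : 0 ≤ Sc := tsum_norm_rpow_nonneg p _
  have hSd0 : 0 ≤ Sd := tsum_norm_rpow_nonneg p _
  -- power mean step
  have hpm : ((Sc + Sd)/2) ^ (2/p) ≤ (Sc ^ (2/p) + Sd ^ (2/p))/2 := by
    have hconv := convexOn_rpow (show (1:ℝ) ≤ 2/p by
      rw [le_div_iff₀ hp0]; linarith)
    have h := hconv.2 (mem_Ici.mpr hSc0) (mem_Ici.mpr hSd0)
      (by norm_num : (0:ℝ) ≤ 1/2) (by norm_num : (0:ℝ) ≤ 1/2) (by norm_num)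
    simp only [smul_eq_mul] at h
    calc ((Sc + Sd)/2) ^ (2/p) = (1/2*Sc + 1/2*Sd) ^ (2/p) := by ring_nf
      _ ≤ 1/2 * Sc ^ (2/p) + 1/2 * Sd ^ (2/p) := h
      _ = (Sc ^ (2/p) + Sd ^ (2/p))/2 := by ring
  calc pnorm p a ^ 2 + (p-1) * pnorm p b ^ 2
      ≤ (∑' k, (u k + v k) ^ (p/2)) ^ (1/(p/2)) := hmink
    _ ≤ (((Sc + Sd))/2) ^ (2/p) := by
        rw [hinv]
        apply Real.rpow_le_rpow (tsum_nonneg fun k =>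
          Real.rpow_nonneg (add_nonneg (hu0 k) (hv0 k)) _) hsum (by positivity)
    _ ≤ (Sc ^ (2/p) + Sd ^ (2/p))/2 := hpm
    _ = (pnorm p (fun k => a k + b k) ^ 2 + pnorm p (fun k => a k - b k) ^ 2) / 2 := by
        rw [pnorm_sq hp0, pnorm_sq hp0]

lemma norm_real_smul (r : ℝ) (z : ℂ) : ‖(r:ℂ) * z‖ = |r| * ‖z‖ := by
  rw [norm_mul, Complex.norm_real, Real.norm_eq_abs]

lemma summable_real_smul {p : ℝ} (hp0 : 0 < p) (r : ℝ) {y : ℕ → ℂ}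
    (hy : Summable fun k => ‖y k‖ ^ p) :
    Summable fun k => ‖(r:ℂ) * y k‖ ^ p := by
  have : ∀ k, ‖(r:ℂ) * y k‖ ^ p = |r|^p * ‖y k‖ ^ p := by
    intro k
    rw [norm_real_smul, Real.mul_rpow (abs_nonneg r) (norm_nonneg _)]
  simp only [this]
  exact hy.mul_left _

lemma pnorm_real_smul {p : ℝ} (hp0 : 0 < p) (r : ℝ) (y : ℕ → ℂ) :
    pnorm p (fun k => (r:ℂ) * y k) = |r| * pnorm p y := by
  unfold pnorm
  have e : ∀ k, ‖(r:ℂ) * y k‖ ^ p = |r|^p * ‖y k‖ ^ p := by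
    intro k
    rw [norm_real_smul, Real.mul_rpow (abs_nonneg r) (norm_nonneg _)]
  rw [tsum_congr e, tsum_mul_left,
    Real.mul_rpow (Real.rpow_nonneg (abs_nonneg r) p) (tsum_norm_rpow_nonneg p y),
    one_div, Real.rpow_rpow_inv (abs_nonneg r) hp0.ne']

theorem pythagorean_lower_small_p (p : ℝ) (hp1 : 1 < p) (hp2 : p ≤ 2)
    (x y : ℕ → ℂ) (hx : Summable fun k => ‖x k‖ ^ p) (hy : Summable fun k => ‖y k‖ ^ p)
    (horth : ∀ β : ℂ, pnorm p x ≤ pnorm p (fun k => x k + β * y k)) :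
    pnorm p x ^ 2 + (p - 1) * pnorm p y ^ 2 ≤ pnorm p (fun k => x k + y k) ^ 2 := by
  have hp0 : (0:ℝ) < p := by linarith
  set f : ℝ → ℝ := fun t => pnorm p (fun k => x k + (t:ℂ) * y k) ^ 2 with hf
  set c : ℝ := (p-1) * pnorm p y ^ 2 with hc
  have hf0 : f 0 = pnorm p x ^ 2 := by simp [hf]
  have hge : ∀ t : ℝ, f 0 ≤ f t := by
    intro t
    rw [hf0]
    exact pow_le_pow_left₀ (pnorm_nonneg _ _) (horth (t:ℂ)) 2
  have hsummt : ∀ t : ℝ, Summable fun k => ‖x k + (t:ℂ) * y k‖ ^ p := by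
    intro t
    exact summable_rpow_bound hp0 hx (summable_real_smul hp0 t hy)
      (fun k => norm_add_le _ _)
  have hstrong : ∀ s t : ℝ, f ((s+t)/2) + c * ((s-t)/2)^2 ≤ (f s + f t)/2 := by
    intro s t
    have hB := bcl hp1 hp2 (fun k => x k + (((s+t)/2 : ℝ):ℂ) * y k)
      (fun k => (((s-t)/2 : ℝ):ℂ) * y k) (hsummt _)
      (summable_real_smul hp0 _ hy)
    have e1 : (fun k => (x k + (((s+t)/2 : ℝ):ℂ) * y k) + (((s-t)/2 : ℝ):ℂ) * y k)
        = fun k => x k + (s:ℂ) * y k := by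
      funext k; push_cast; ring
    have e2 : (fun k => (x k + (((s+t)/2 : ℝ):ℂ) * y k) - (((s-t)/2 : ℝ):ℂ) * y k)
        = fun k => x k + (t:ℂ) * y k := by
      funext k; push_cast; ring
    rw [e1, e2, pnorm_real_smul hp0] at hB
    calc f ((s+t)/2) + c * ((s-t)/2)^2
        = pnorm p (fun k => x k + (((s+t)/2 : ℝ):ℂ) * y k) ^ 2
          + (p-1) * (|((s-t)/2)| * pnorm p y) ^ 2 := by
          rw [hf, hc]
          congr 1
          rw [mul_pow, sq_abs]
          ring
      _ ≤ (f s + f t)/2 := hB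
  have hiter : ∀ n : ℕ, ∀ t : ℝ, f 0 + c * t^2 * (1 - (1/2)^n) ≤ f t := by
    intro n
    induction n with
    | zero => intro t; simpa using hge t
    | succ n ih =>
      intro t
      have h1 := hstrong t 0
      have h2 := ih (t/2)
      have e0 : (t + 0)/2 = t/2 := by ring
      have e0' : (t - 0)/2 = t/2 := by ring
      rw [e0, e0'] at h1
      have e : (t/2)^2 = t^2/4 := by ring
      rw [e] at h1 h2
      have e2 : ((1:ℝ)/2)^(n+1) = (1/2)^n / 2 := by rw [pow_succ]; ring
      rw [e2]
      nlinarith [h1, h2]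
  have hlim : Tendsto (fun n : ℕ => f 0 + c * 1^2 * (1 - (1/2)^n)) atTop
      (nhds (f 0 + c * 1^2 * (1 - 0))) := by
    apply Tendsto.const_add
    apply Tendsto.const_mul
    apply Tendsto.const_sub
    exact tendsto_pow_atTop_nhds_zero_of_lt_one (by norm_num) (by norm_num)
  have hfin : f 0 + c ≤ f 1 := by
    have := le_of_tendsto hlim (Eventually.of_forall fun n => hiter n 1)
    simpa using this
  rw [hf0] at hfin
  have e1 : f 1 = pnorm p (fun k => x k + y k) ^ 2 := by
    rw [hf]
    norm_num
  rw [e1] at hfin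
  exact hfin
end

section
/- For p ∈ [2,∞) and vectors x, y in ℓ^p with x ⊥_p y in the Birkhoff–James sense, we have ‖x + y‖_p^p ≥ ‖x‖_p^p + (2^{p-1} - 1)^{-1} ‖y‖_p^p. -/
open Filter Topology

private lemma rpow_superadd {p a b : ℝ} (hp : 1 ≤ p) (ha : 0 ≤ a) (hb : 0 ≤ b) :
    a ^ p + b ^ p ≤ (a + b) ^ p := by
  have h := NNReal.add_rpow_le_rpow_add (⟨a, ha⟩ : NNReal) (⟨b, hb⟩ : NNReal) hp
  have h2 := NNReal.coe_le_coe.2 h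
  push_cast at h2
  exact h2

private lemma rpow_submean {p a b : ℝ} (hp : 1 ≤ p) (ha : 0 ≤ a) (hb : 0 ≤ b) :
    (a + b) ^ p ≤ 2 ^ (p - 1) * (a ^ p + b ^ p) := by
  have h := NNReal.rpow_add_le_mul_rpow_add_rpow (⟨a, ha⟩ : NNReal) (⟨b, hb⟩ : NNReal) hp
  have h2 := NNReal.coe_le_coe.2 h
  push_cast at h2
  exact h2

private lemma clarkson_point {p : ℝ} (hp : 2 ≤ p) (m d : ℂ) :
    2 * ‖m‖ ^ p + 2 * ‖d‖ ^ p ≤ ‖m + d‖ ^ p + ‖m - d‖ ^ p := by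
  set q := p / 2 with hq
  have hq1 : 1 ≤ q := by rw [hq]; linarith
  have hM := norm_nonneg m
  have hD := norm_nonneg d
  have key : ∀ x : ℝ, 0 ≤ x → x ^ p = (x ^ 2) ^ q := by
    intro x hx
    rw [← Real.rpow_natCast x 2, ← Real.rpow_mul hx]
    congr 1
    rw [hq]
    push_cast
    ring
  have par : ‖m + d‖ ^ 2 + ‖m - d‖ ^ 2 = 2 * (‖m‖ ^ 2 + ‖d‖ ^ 2) := by
    have h := parallelogram_law_with_norm ℂ m d
    rw [pow_two, pow_two, pow_two, pow_two]
    linear_combination h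
  rw [key _ hM, key _ hD, key _ (norm_nonneg (m + d)), key _ (norm_nonneg (m - d))]
  have h1 : (‖m‖ ^ 2) ^ q + (‖d‖ ^ 2) ^ q ≤ (‖m‖ ^ 2 + ‖d‖ ^ 2) ^ q :=
    rpow_superadd hq1 (sq_nonneg _) (sq_nonneg _)
  have h2 : (‖m + d‖ ^ 2 + ‖m - d‖ ^ 2) ^ q
      ≤ 2 ^ (q - 1) * ((‖m + d‖ ^ 2) ^ q + (‖m - d‖ ^ 2) ^ q) :=
    rpow_submean hq1 (sq_nonneg _) (sq_nonneg _)
  rw [par] at h2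
  have h3 : (2 * (‖m‖ ^ 2 + ‖d‖ ^ 2)) ^ q = 2 ^ q * (‖m‖ ^ 2 + ‖d‖ ^ 2) ^ q :=
    Real.mul_rpow (by norm_num) (by positivity)
  rw [h3] at h2
  have h4 : (2:ℝ) ^ q = 2 * 2 ^ (q - 1) := by
    rw [show q = 1 + (q - 1) by ring, Real.rpow_add two_pos, Real.rpow_one]
    ring_nf
  have hpos : (0:ℝ) < 2 ^ (q - 1) := Real.rpow_pos_of_pos two_pos _
  have h5 : 2 * (‖m‖ ^ 2 + ‖d‖ ^ 2) ^ q
      ≤ (‖m + d‖ ^ 2) ^ q + (‖m - d‖ ^ 2) ^ q := by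
    rw [h4] at h2
    nlinarith [h2]
  nlinarith [h1, h5]

private lemma summable_add_rpow {p : ℝ} (hp : 1 ≤ p) {u v : ℕ → ℂ}
    (hu : Summable fun k => ‖u k‖ ^ p) (hv : Summable fun k => ‖v k‖ ^ p) :
    Summable fun k => ‖u k + v k‖ ^ p := by
  refine Summable.of_nonneg_of_le (fun k => Real.rpow_nonneg (norm_nonneg _) p)
    (fun k => ?_) ((hu.add hv).mul_left ((2:ℝ) ^ (p - 1)))
  calc ‖u k + v k‖ ^ p ≤ (‖u k‖ + ‖v k‖) ^ p :=
        Real.rpow_le_rpow (norm_nonneg _) (norm_add_le _ _) (by linarith)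
    _ ≤ 2 ^ (p - 1) * (‖u k‖ ^ p + ‖v k‖ ^ p) :=
        rpow_submean hp (norm_nonneg _) (norm_nonneg _)

theorem pythagorean_lower_large_p (p : ℝ) (hp : 2 ≤ p)
    (x y : ℕ → ℂ) (hx : Summable fun k => ‖x k‖ ^ p) (hy : Summable fun k => ‖y k‖ ^ p)
    (horth : ∀ β : ℂ, pnorm p x ≤ pnorm p (fun k => x k + β * y k)) :
    pnorm p x ^ p + ((2:ℝ) ^ (p - 1) - 1)⁻¹ * pnorm p y ^ p
      ≤ pnorm p (fun k => x k + y k) ^ p := by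
  have hp1 : (1:ℝ) ≤ p := by linarith
  have hp0 : (0:ℝ) < p := by linarith
  have pnorm_pow : ∀ a : ℕ → ℂ, pnorm p a ^ p = ∑' k, ‖a k‖ ^ p := by
    intro a
    have h0 : (0:ℝ) ≤ ∑' k, ‖a k‖ ^ p :=
      tsum_nonneg fun k => Real.rpow_nonneg (norm_nonneg _) p
    rw [pnorm, ← Real.rpow_mul h0, one_div_mul_cancel hp0.ne', Real.rpow_one]
  -- summability of scaled y
  have hsty : ∀ t : ℝ, Summable fun k => ‖((t:ℂ)) * y k‖ ^ p := by
    intro t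
    have he : (fun k => ‖((t:ℂ)) * y k‖ ^ p) = fun k => |t| ^ p * ‖y k‖ ^ p := by
      funext k
      rw [norm_mul, Complex.norm_real, Real.norm_eq_abs,
        Real.mul_rpow (abs_nonneg _) (norm_nonneg _)]
    rw [he]
    exact hy.mul_left _
  have hFs : ∀ t : ℝ, Summable fun k => ‖x k + ((t:ℂ)) * y k‖ ^ p :=
    fun t => summable_add_rpow hp1 hx (hsty t)
  set X : ℝ := ∑' k, ‖x k‖ ^ p with hX
  set Y : ℝ := ∑' k, ‖y k‖ ^ p with hY
  set F : ℝ → ℝ := fun t => ∑' k, ‖x k + ((t:ℂ)) * y k‖ ^ p with hFdef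
  -- orthogonality
  have hor : ∀ t : ℝ, X ≤ F t := by
    intro t
    have h := horth ((t:ℂ))
    have h1 : 0 ≤ pnorm p x :=
      Real.rpow_nonneg (tsum_nonneg fun k => Real.rpow_nonneg (norm_nonneg _) p) _
    have h2 := Real.rpow_le_rpow h1 h hp0.le
    rw [pnorm_pow, pnorm_pow] at h2
    exact h2
  -- midpoint inequality
  have hmid : ∀ t : ℝ, 0 ≤ t → 2 * F (t / 2) + 2 * ((t / 2) ^ p * Y) ≤ F t + X := by
    intro t ht
    have ht2 : (0:ℝ) ≤ t / 2 := by positivity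
    have hpt : ∀ k, 2 * ‖x k + ((t / 2 : ℝ) : ℂ) * y k‖ ^ p + 2 * ((t / 2) ^ p * ‖y k‖ ^ p)
        ≤ ‖x k + ((t : ℝ) : ℂ) * y k‖ ^ p + ‖x k‖ ^ p := by
      intro k
      have h := clarkson_point hp (x k + ((t / 2 : ℝ) : ℂ) * y k) (((t / 2 : ℝ) : ℂ) * y k)
      have e1 : x k + ((t / 2 : ℝ) : ℂ) * y k + ((t / 2 : ℝ) : ℂ) * y k
          = x k + ((t : ℝ) : ℂ) * y k := by push_cast; ring
      have e2 : x k + ((t / 2 : ℝ) : ℂ) * y k - ((t / 2 : ℝ) : ℂ) * y k = x k := by ring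
      have e3 : ‖((t / 2 : ℝ) : ℂ) * y k‖ ^ p = (t / 2) ^ p * ‖y k‖ ^ p := by
        rw [norm_mul, Complex.norm_real, Real.norm_eq_abs, abs_of_nonneg ht2,
          Real.mul_rpow ht2 (norm_nonneg _)]
      rw [e1, e2, e3] at h
      linarith
    have hs1 : Summable fun k => 2 * ‖x k + ((t / 2 : ℝ) : ℂ) * y k‖ ^ p :=
      (hFs (t / 2)).mul_left 2
    have hs2 : Summable fun k => 2 * ((t / 2) ^ p * ‖y k‖ ^ p) :=
      (hy.mul_left ((t / 2) ^ p)).mul_left 2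
    have hle := Summable.tsum_le_tsum hpt (hs1.add hs2) ((hFs t).add hx)
    rw [Summable.tsum_add hs1 hs2, Summable.tsum_add (hFs t) hx, tsum_mul_left, tsum_mul_left,
      tsum_mul_left] at hle
    exact hle
  -- the geometric ratio
  set r : ℝ := (2:ℝ) ^ (1 - p) with hr
  have hr0 : 0 < r := Real.rpow_pos_of_pos two_pos _
  have hrlt : r < 1 :=
    Real.rpow_lt_one_of_one_lt_of_neg one_lt_two (by linarith)
  have h2r : ∀ t : ℝ, 0 ≤ t → 2 * (t / 2) ^ p = r * t ^ p := by
    intro t ht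
    rw [Real.div_rpow ht (by norm_num : (0:ℝ) ≤ 2), hr,
      show (1:ℝ) - p = 1 + (-p) by ring, Real.rpow_add two_pos, Real.rpow_one,
      Real.rpow_neg (by norm_num : (0:ℝ) ≤ 2)]
    field_simp
  set c : ℝ := ((2:ℝ) ^ (p - 1) - 1)⁻¹ with hc
  have he : (2:ℝ) ^ (p - 1) = r⁻¹ := by
    rw [hr, ← Real.rpow_neg (by norm_num : (0:ℝ) ≤ 2), neg_sub]
  have hcr : c = r * (c + 1) := by
    have h1r : (0:ℝ) < 1 - r := by linarith
    have hd : r⁻¹ - 1 = (1 - r) / r := by field_simp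
    rw [hc, he, hd, inv_div]
    field_simp
    ring
  -- main induction
  have main : ∀ n : ℕ, ∀ t : ℝ, 0 ≤ t → X + c * (1 - r ^ n) * (t ^ p * Y) ≤ F t := by
    intro n
    induction n with
    | zero => intro t ht; simpa using hor t
    | succ n ih =>
      intro t ht
      have h1 := hmid t ht
      have h2 := ih (t / 2) (by positivity)
      have hYnn : (0:ℝ) ≤ Y :=
        tsum_nonneg fun k => Real.rpow_nonneg (norm_nonneg _) p
      have halg : c * (1 - r ^ (n + 1)) = r * (c * (1 - r ^ n) + 1) := by
        linear_combination hcr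
      have hrw : X + c * (1 - r ^ (n + 1)) * (t ^ p * Y)
          = X + (c * (1 - r ^ n) + 1) * (2 * (t / 2) ^ p * Y) := by
        rw [halg]
        linear_combination (-((c * (1 - r ^ n) + 1) * Y)) * h2r t ht
      rw [hrw]
      nlinarith [h1, h2]
  have final : ∀ n : ℕ, X + c * (1 - r ^ n) * Y ≤ F 1 := by
    intro n
    have h := main n 1 zero_le_one
    rw [Real.one_rpow, one_mul] at h
    exact h
  have hlim : Tendsto (fun n : ℕ => X + c * (1 - r ^ n) * Y) atTop
      (𝓝 (X + c * (1 - 0) * Y)) := by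
    have h0 : Tendsto (fun n : ℕ => r ^ n) atTop (𝓝 0) :=
      tendsto_pow_atTop_nhds_zero_of_lt_one hr0.le hrlt
    exact tendsto_const_nhds.add (((tendsto_const_nhds.sub h0).const_mul c).mul_const Y)
  have hfin : X + c * Y ≤ F 1 := by
    have := le_of_tendsto' hlim final
    simpa using this
  rw [pnorm_pow, pnorm_pow, pnorm_pow]
  have hF1 : F 1 = ∑' k, ‖x k + y k‖ ^ p := by
    rw [hFdef]
    simp
  rw [← hF1]
  exact hfin
end

section
/- For p ∈ (1,∞), vectors a, b ∈ ℓ^p satisfy a ⊥_p b (Birkhoff–James orthogonality) if and only if Σ_{k≥0} |a_k|^{p-2} conj(a_k) b_k = 0, where any occurrence of |0|^{p-2}·0 is interpreted as 0. -/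
open Complex Filter Topology

lemma aux_rpow_convex {p r s : ℝ} (hp : 1 ≤ p) (hr : 0 < r) (hs : 0 ≤ s) :
    r ^ p + p * r ^ (p - 1) * (s - r) ≤ s ^ p := by
  have h1 : (-1 : ℝ) ≤ s / r - 1 := by
    have : 0 ≤ s / r := div_nonneg hs hr.le
    linarith
  have h := one_add_mul_self_le_rpow_one_add h1 hp
  rw [show (1 + (s / r - 1)) = s / r by ring, Real.div_rpow hs hr.le] at h
  have hrp : (0:ℝ) < r ^ p := Real.rpow_pos_of_pos hr p
  have h3 : r ^ (p - 1) = r ^ p / r := by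
    rw [Real.rpow_sub hr, Real.rpow_one]
  have h4 := mul_le_mul_of_nonneg_right h hrp.le
  calc r ^ p + p * r ^ (p - 1) * (s - r)
      = (1 + p * (s / r - 1)) * r ^ p := by rw [h3]; field_simp
    _ ≤ s ^ p / r ^ p * r ^ p := h4
    _ = s ^ p := by field_simp

lemma aux_subgrad {p : ℝ} (hp : 1 < p) (z w : ℂ) :
    ‖z‖ ^ p + p * (‖z‖ ^ (p - 2) * ((starRingEnd ℂ z) * w).re) ≤ ‖z + w‖ ^ p := by
  rcases eq_or_ne z 0 with rfl | hz
  · simp [Real.zero_rpow (by positivity : p ≠ 0)]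
    positivity
  · have hr : 0 < ‖z‖ := norm_pos_iff.mpr hz
    have e1 : ((starRingEnd ℂ z) * z).re = ‖z‖ ^ (2:ℕ) := by
      rw [RCLike.conj_mul]
      norm_cast
    have key : ((starRingEnd ℂ z) * w).re ≤ ‖z‖ * ‖z + w‖ - ‖z‖ ^ (2:ℕ) := by
      have h5 : ((starRingEnd ℂ z) * (z + w)).re ≤ ‖z‖ * ‖z + w‖ := by
        calc ((starRingEnd ℂ z) * (z + w)).re ≤ ‖(starRingEnd ℂ z) * (z + w)‖ :=
              Complex.re_le_norm _
          _ = ‖z‖ * ‖z + w‖ := by rw [norm_mul, RCLike.norm_conj]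
      have h6 : ((starRingEnd ℂ z) * (z + w)).re
          = ((starRingEnd ℂ z) * z).re + ((starRingEnd ℂ z) * w).re := by
        rw [mul_add, Complex.add_re]
      rw [h6, e1] at h5
      linarith
    have e2 : ‖z‖ ^ (p - 1) = ‖z‖ ^ (p - 2) * ‖z‖ := by
      rw [show p - 1 = (p - 2) + 1 by ring, Real.rpow_add hr, Real.rpow_one]
    have e3 : ‖z‖ ^ p = ‖z‖ ^ (p - 2) * ‖z‖ ^ (2:ℕ) := by
      rw [show p = (p - 2) + 2 by ring, Real.rpow_add hr]
      norm_num
    have hpow : (0:ℝ) ≤ ‖z‖ ^ (p - 2) := Real.rpow_nonneg hr.le _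
    have h7 : ‖z‖ ^ (p - 2) * ((starRingEnd ℂ z) * w).re
        ≤ ‖z‖ ^ (p - 1) * (‖z + w‖ - ‖z‖) := by
      have := mul_le_mul_of_nonneg_left key hpow
      calc ‖z‖ ^ (p - 2) * ((starRingEnd ℂ z) * w).re
          ≤ ‖z‖ ^ (p - 2) * (‖z‖ * ‖z + w‖ - ‖z‖ ^ (2:ℕ)) := this
        _ = ‖z‖ ^ (p - 1) * (‖z + w‖ - ‖z‖) := by rw [e2]; ring
    have h8 := aux_rpow_convex hp.le hr (norm_nonneg (z + w))
    have hp0 : (0:ℝ) < p := by linarith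
    nlinarith [mul_le_mul_of_nonneg_left h7 hp0.le]

lemma aux_rpow_succ {y q : ℝ} (hy : 0 ≤ y) (hq : q + 1 ≠ 0) : y ^ q * y = y ^ (q + 1) := by
  rw [Real.rpow_add' hy hq, Real.rpow_one]

lemma aux_g_bound {p : ℝ} (hp : 1 < p) (z w : ℂ) :
    |‖z‖ ^ (p - 2) * ((starRingEnd ℂ z) * w).re| ≤ ‖z‖ ^ (p - 1) * ‖w‖ := by
  rcases eq_or_ne z 0 with rfl | hz
  · simp
    positivity
  · have hr : 0 < ‖z‖ := norm_pos_iff.mpr hz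
    have hpow : (0:ℝ) ≤ ‖z‖ ^ (p - 2) := Real.rpow_nonneg hr.le _
    rw [abs_mul, _root_.abs_of_nonneg hpow]
    calc ‖z‖ ^ (p - 2) * |((starRingEnd ℂ z) * w).re|
        ≤ ‖z‖ ^ (p - 2) * ‖(starRingEnd ℂ z) * w‖ := by
          gcongr
          exact Complex.abs_re_le_norm _
      _ = ‖z‖ ^ (p - 2) * (‖z‖ * ‖w‖) := by rw [norm_mul, RCLike.norm_conj]
      _ = ‖z‖ ^ (p - 1) * ‖w‖ := by
          rw [show p - 1 = (p - 2) + 1 by ring, Real.rpow_add hr, Real.rpow_one]; ring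

lemma aux_pow_sum {p : ℝ} (hp : 1 ≤ p) {f g : ℕ → ℝ} (hf0 : ∀ k, 0 ≤ f k)
    (hg0 : ∀ k, 0 ≤ g k) (hf : Summable fun k => f k ^ p)
    (hg : Summable fun k => g k ^ p) : Summable fun k => (f k + g k) ^ p := by
  have hp0 : (0:ℝ) ≤ p := by linarith
  apply Summable.of_nonneg_of_le (fun k => Real.rpow_nonneg (add_nonneg (hf0 k) (hg0 k)) p)
    (fun k => ?_) (((hf.add hg).mul_left ((2:ℝ) ^ p)))
  have h1 : f k + g k ≤ 2 * max (f k) (g k) := by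
    rcases le_total (f k) (g k) with h | h
    · rw [max_eq_right h]; linarith
    · rw [max_eq_left h]; linarith
  calc (f k + g k) ^ p ≤ (2 * max (f k) (g k)) ^ p :=
        Real.rpow_le_rpow (add_nonneg (hf0 k) (hg0 k)) h1 hp0
    _ = 2 ^ p * max (f k) (g k) ^ p :=
        Real.mul_rpow (by norm_num) (le_max_of_le_left (hf0 k))
    _ ≤ 2 ^ p * (f k ^ p + g k ^ p) := by
        gcongr
        rcases max_cases (f k) (g k) with ⟨h, _⟩ | ⟨h, _⟩ <;> rw [h]
        · exact le_add_of_nonneg_right (Real.rpow_nonneg (hg0 k) p)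
        · exact le_add_of_nonneg_left (Real.rpow_nonneg (hf0 k) p)

lemma aux_bound_summable {p : ℝ} (hp : 1 < p) {a b : ℕ → ℂ}
    (ha : Summable fun k => ‖a k‖ ^ p) (hb : Summable fun k => ‖b k‖ ^ p) (c : ℂ) :
    Summable fun k => (‖a k‖ + ‖c * b k‖) ^ (p - 1) * ‖b k‖ := by
  have hcb : Summable fun k => ‖c * b k‖ ^ p := by
    simp_rw [norm_mul, Real.mul_rpow (norm_nonneg c) (norm_nonneg _)]
    exact hb.mul_left _
  have hsum := (aux_pow_sum hp.le (fun k => norm_nonneg (a k))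
    (fun k => norm_nonneg (c * b k)) ha hcb).add hb
  apply Summable.of_nonneg_of_le (fun k => by positivity) (fun k => ?_) hsum
  set x := ‖a k‖ + ‖c * b k‖ with hx
  have hx0 : 0 ≤ x := by positivity
  have hy0 : (0:ℝ) ≤ ‖b k‖ := norm_nonneg _
  rcases le_total x ‖b k‖ with h | h
  · calc x ^ (p - 1) * ‖b k‖ ≤ ‖b k‖ ^ (p - 1) * ‖b k‖ :=
          mul_le_mul_of_nonneg_right (Real.rpow_le_rpow hx0 h (by linarith)) hy0
      _ = ‖b k‖ ^ p := by
          rw [aux_rpow_succ hy0 (by norm_num; linarith)]; norm_num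
      _ ≤ x ^ p + ‖b k‖ ^ p := le_add_of_nonneg_left (Real.rpow_nonneg hx0 p)
  · calc x ^ (p - 1) * ‖b k‖ ≤ x ^ (p - 1) * x := by
          gcongr
      _ = x ^ p := by
          rw [aux_rpow_succ hx0 (by norm_num; linarith)]; norm_num
      _ ≤ x ^ p + ‖b k‖ ^ p := le_add_of_nonneg_right (Real.rpow_nonneg hy0 p)

lemma aux_term_bound {p : ℝ} (hp : 1 < p) (z w : ℂ) :
    ‖((‖z‖ ^ (p - 2) : ℝ) : ℂ) * (starRingEnd ℂ z) * w‖ ≤ ‖z‖ ^ (p - 1) * ‖w‖ := by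
  rcases eq_or_ne z 0 with rfl | hz
  · simp
    positivity
  · have hr : 0 < ‖z‖ := norm_pos_iff.mpr hz
    rw [norm_mul, norm_mul, Complex.norm_real,
      Real.norm_of_nonneg (Real.rpow_nonneg hr.le _), RCLike.norm_conj]
    rw [show p - 1 = (p - 2) + 1 by ring, Real.rpow_add hr, Real.rpow_one]

noncomputable def gfun (p : ℝ) (z w : ℂ) : ℝ := ‖z‖ ^ (p - 2) * ((starRingEnd ℂ z) * w).re

lemma aux_cb_summable {p : ℝ} (hp : 0 < p) {b : ℕ → ℂ}
    (hb : Summable fun k => ‖b k‖ ^ p) (c : ℂ) :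
    Summable fun k => ‖c * b k‖ ^ p := by
  simp_rw [norm_mul, Real.mul_rpow (norm_nonneg c) (norm_nonneg _)]
  exact hb.mul_left _

lemma aux_F_summable {p : ℝ} (hp : 1 < p) {a b : ℕ → ℂ}
    (ha : Summable fun k => ‖a k‖ ^ p) (hb : Summable fun k => ‖b k‖ ^ p) (c : ℂ) :
    Summable fun k => ‖a k + c * b k‖ ^ p := by
  have h := aux_pow_sum hp.le (fun k => norm_nonneg (a k)) (fun k => norm_nonneg (c * b k))
    ha (aux_cb_summable (by linarith) hb c)
  apply Summable.of_nonneg_of_le (fun k => Real.rpow_nonneg (norm_nonneg _) p)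
    (fun k => Real.rpow_le_rpow (norm_nonneg _) (norm_add_le _ _) (by linarith)) h

lemma aux_g_summable {p : ℝ} (hp : 1 < p) {a b : ℕ → ℂ}
    (ha : Summable fun k => ‖a k‖ ^ p) (hb : Summable fun k => ‖b k‖ ^ p) (c : ℂ) :
    Summable fun k => gfun p (a k) (c * b k) := by
  have h0 : Summable fun k => ‖a k‖ ^ (p - 1) * ‖b k‖ := by
    simpa using aux_bound_summable hp ha hb 0
  apply Summable.of_abs
  apply Summable.of_nonneg_of_le (fun k => abs_nonneg _) (fun k => ?_) (h0.mul_left ‖c‖)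
  calc |gfun p (a k) (c * b k)| ≤ ‖a k‖ ^ (p - 1) * ‖c * b k‖ := aux_g_bound hp _ _
    _ = ‖c‖ * (‖a k‖ ^ (p - 1) * ‖b k‖) := by rw [norm_mul]; ring

lemma aux_key {p : ℝ} (hp : 1 < p) {a b : ℕ → ℂ}
    (ha : Summable fun k => ‖a k‖ ^ p) (hb : Summable fun k => ‖b k‖ ^ p) (c : ℂ) :
    (∑' k, ‖a k‖ ^ p) + p * ∑' k, gfun p (a k) (c * b k)
      ≤ ∑' k, ‖a k + c * b k‖ ^ p := by
  have hg := aux_g_summable hp ha hb c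
  calc (∑' k, ‖a k‖ ^ p) + p * ∑' k, gfun p (a k) (c * b k)
      = ∑' k, (‖a k‖ ^ p + p * gfun p (a k) (c * b k)) := by
        rw [Summable.tsum_add ha (hg.mul_left p), tsum_mul_left]
    _ ≤ ∑' k, ‖a k + c * b k‖ ^ p :=
        Summable.tsum_le_tsum (fun k => aux_subgrad hp (a k) (c * b k))
          (ha.add (hg.mul_left p)) (aux_F_summable hp ha hb c)

theorem birkhoff_james_criterion (p : ℝ) (hp : 1 < p) (a b : ℕ → ℂ)
    (ha : Summable fun k => ‖a k‖ ^ p) (hb : Summable fun k => ‖b k‖ ^ p) :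
    (∀ β : ℂ, pnorm p a ≤ pnorm p (fun k => a k + β * b k)) ↔
      ∑' k, ((‖a k‖ ^ (p - 2) : ℝ) : ℂ) * (starRingEnd ℂ (a k)) * b k = 0 := by
  have hp0 : (0:ℝ) < p := by linarith
  have hT : Summable fun k => ((‖a k‖ ^ (p - 2) : ℝ) : ℂ) * (starRingEnd ℂ (a k)) * b k := by
    apply Summable.of_norm
    have h0 : Summable fun k => ‖a k‖ ^ (p - 1) * ‖b k‖ := by
      simpa using aux_bound_summable hp ha hb 0
    exact Summable.of_nonneg_of_le (fun k => norm_nonneg _)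
      (fun k => aux_term_bound hp _ _) h0
  set S : ℂ := ∑' k, ((‖a k‖ ^ (p - 2) : ℝ) : ℂ) * (starRingEnd ℂ (a k)) * b k with hSdef
  have hre : ∀ c : ℂ, ∑' k, gfun p (a k) (c * b k) = (c * S).re := by
    intro c
    have h1 : ∀ k, gfun p (a k) (c * b k)
        = (c * (((‖a k‖ ^ (p - 2) : ℝ) : ℂ) * (starRingEnd ℂ (a k)) * b k)).re := by
      intro k
      unfold gfun
      rw [show c * (((‖a k‖ ^ (p - 2) : ℝ) : ℂ) * (starRingEnd ℂ (a k)) * b k)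
          = ((‖a k‖ ^ (p - 2) : ℝ) : ℂ) * ((starRingEnd ℂ (a k)) * (c * b k)) by ring,
        Complex.re_ofReal_mul]
    calc ∑' k, gfun p (a k) (c * b k)
        = ∑' k, (c * (((‖a k‖ ^ (p - 2) : ℝ) : ℂ) * (starRingEnd ℂ (a k)) * b k)).re :=
          tsum_congr h1
      _ = (c * S).re := (Complex.hasSum_re (hT.hasSum.mul_left c)).tsum_eq
  have hiff : ∀ c : ℂ, (pnorm p a ≤ pnorm p fun k => a k + c * b k) ↔
      (∑' k, ‖a k‖ ^ p) ≤ ∑' k, ‖a k + c * b k‖ ^ p := by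
    intro c
    unfold pnorm
    exact Real.rpow_le_rpow_iff
      (tsum_nonneg fun k => Real.rpow_nonneg (norm_nonneg _) p)
      (tsum_nonneg fun k => Real.rpow_nonneg (norm_nonneg _) p)
      (by positivity)
  constructor
  · intro horto
    have hclaim : ∀ c : ℂ, 0 ≤ (c * S).re := by
      intro c
      have hGpos : ∀ t : ℝ, 0 < t →
          0 ≤ ∑' k, gfun p (a k + (t : ℂ) * c * b k) (c * b k) := by
        intro t ht
        have ha' : Summable fun k => ‖a k + (t : ℂ) * c * b k‖ ^ p :=
          aux_F_summable hp ha hb ((t : ℂ) * c)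
        have hk := aux_key hp ha' hb (-((t : ℂ) * c))
        have e1 : (∑' k, ‖(a k + (t : ℂ) * c * b k) + (-((t : ℂ) * c)) * b k‖ ^ p)
            = ∑' k, ‖a k‖ ^ p :=
          tsum_congr fun k => by rw [show (a k + (t : ℂ) * c * b k) + (-((t : ℂ) * c)) * b k
            = a k by ring]
        have hlin : ∀ k, gfun p (a k + (t : ℂ) * c * b k) ((-((t : ℂ) * c)) * b k)
            = -t * gfun p (a k + (t : ℂ) * c * b k) (c * b k) := by
          intro k
          unfold gfun
          rw [show (starRingEnd ℂ (a k + (t : ℂ) * c * b k)) * ((-((t : ℂ) * c)) * b k)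
              = (((-t : ℝ)) : ℂ) * ((starRingEnd ℂ (a k + (t : ℂ) * c * b k)) * (c * b k)) by
            push_cast; ring, Complex.re_ofReal_mul]
          ring
        have e2 : (∑' k, gfun p (a k + (t : ℂ) * c * b k) ((-((t : ℂ) * c)) * b k))
            = -t * ∑' k, gfun p (a k + (t : ℂ) * c * b k) (c * b k) := by
          rw [tsum_congr hlin, tsum_mul_left]
        rw [e1, e2] at hk
        have hF0 := (hiff ((t : ℂ) * c)).mp (horto ((t : ℂ) * c))
        nlinarith [hF0, hk, mul_pos hp0 ht]
      have hbound := (aux_bound_summable hp ha hb c).mul_left ‖c‖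
      have hlim : Filter.Tendsto (fun t : ℝ => ∑' k, gfun p (a k + (t : ℂ) * c * b k) (c * b k))
          (nhdsWithin 0 (Set.Ioi 0)) (nhds (∑' k, gfun p (a k) (c * b k))) := by
        apply tendsto_tsum_of_dominated_convergence hbound
        · intro k
          rcases eq_or_ne (a k) 0 with hak | hak
          · have h0 : gfun p (a k) (c * b k) = 0 := by
              rw [hak]; unfold gfun; simp
            rw [h0]
            have hub : ∀ᶠ t : ℝ in nhdsWithin 0 (Set.Ioi 0),
                ‖gfun p (a k + (t : ℂ) * c * b k) (c * b k)‖
                  ≤ |t| ^ (p - 1) * (‖c * b k‖ ^ (p - 1) * ‖c * b k‖) := by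
              filter_upwards with t
              have h2 : ‖a k + (t : ℂ) * c * b k‖ = |t| * ‖c * b k‖ := by
                rw [hak, zero_add, mul_assoc, norm_mul, Complex.norm_real, Real.norm_eq_abs]
              calc ‖gfun p (a k + (t : ℂ) * c * b k) (c * b k)‖
                  ≤ ‖a k + (t : ℂ) * c * b k‖ ^ (p - 1) * ‖c * b k‖ := aux_g_bound hp _ _
                _ = |t| ^ (p - 1) * (‖c * b k‖ ^ (p - 1) * ‖c * b k‖) := by
                    rw [h2, Real.mul_rpow (abs_nonneg t) (norm_nonneg _)]; ring
            have h3 : Filter.Tendsto (fun t : ℝ => |t| ^ (p - 1)) (nhdsWithin 0 (Set.Ioi 0)) (nhds 0) := by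
              have h4 : ContinuousAt (fun t : ℝ => |t| ^ (p - 1)) 0 :=
                (_root_.continuous_abs.continuousAt).rpow_const (Or.inr (by linarith))
              have h5 := h4.tendsto
              simp only [abs_zero, Real.zero_rpow (by linarith : p - 1 ≠ 0)] at h5
              exact h5.mono_left nhdsWithin_le_nhds
            have h6 : Filter.Tendsto
                (fun t : ℝ => |t| ^ (p - 1) * (‖c * b k‖ ^ (p - 1) * ‖c * b k‖))
                (nhdsWithin 0 (Set.Ioi 0)) (nhds 0) := by
              simpa using h3.mul_const (‖c * b k‖ ^ (p - 1) * ‖c * b k‖)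
            exact squeeze_zero_norm' hub h6
          · have hz : ContinuousAt (fun t : ℝ => a k + (t : ℂ) * c * b k) 0 := by
              fun_prop
            have hzn : ContinuousAt (fun t : ℝ => ‖a k + (t : ℂ) * c * b k‖) 0 := hz.norm
            have hzv : ‖a k + ((0:ℝ) : ℂ) * c * b k‖ = ‖a k‖ := by norm_num
            have hN : ContinuousAt (fun t : ℝ => ‖a k + (t : ℂ) * c * b k‖ ^ (p - 2)) 0 := by
              apply hzn.rpow_const
              left
              rw [hzv]
              exact fun h => hak (norm_eq_zero.mp h)
            have hR : ContinuousAt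
                (fun t : ℝ => ((starRingEnd ℂ (a k + (t : ℂ) * c * b k)) * (c * b k)).re) 0 := by
              fun_prop
            have htd := (hN.mul hR).tendsto.mono_left
              (nhdsWithin_le_nhds : nhdsWithin (0:ℝ) (Set.Ioi 0) ≤ nhds 0)
            simpa [gfun, Pi.mul_def] using htd
        · filter_upwards [Ioc_mem_nhdsGT_of_mem (by norm_num : (0:ℝ) ∈ Set.Ico 0 1)] with t ht k
          have h1 : ‖a k + (t : ℂ) * c * b k‖ ≤ ‖a k‖ + ‖c * b k‖ := by
            calc ‖a k + (t : ℂ) * c * b k‖ ≤ ‖a k‖ + ‖(t : ℂ) * c * b k‖ := norm_add_le _ _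
              _ ≤ ‖a k‖ + ‖c * b k‖ := by
                  rw [mul_assoc, norm_mul, Complex.norm_real, Real.norm_eq_abs,
                    abs_of_pos ht.1]
                  nlinarith [norm_nonneg (c * b k), ht.2]
          calc ‖gfun p (a k + (t : ℂ) * c * b k) (c * b k)‖
              ≤ ‖a k + (t : ℂ) * c * b k‖ ^ (p - 1) * ‖c * b k‖ := aux_g_bound hp _ _
            _ ≤ (‖a k‖ + ‖c * b k‖) ^ (p - 1) * ‖c * b k‖ :=
                mul_le_mul_of_nonneg_right
                  (Real.rpow_le_rpow (norm_nonneg _) h1 (by linarith)) (norm_nonneg _)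
            _ = ‖c‖ * ((‖a k‖ + ‖c * b k‖) ^ (p - 1) * ‖b k‖) := by rw [norm_mul]; ring
      have h0le : 0 ≤ ∑' k, gfun p (a k) (c * b k) := by
        refine ge_of_tendsto hlim ?_
        filter_upwards [self_mem_nhdsWithin] with t ht
        exact hGpos t ht
      rwa [hre c] at h0le
    have h2 := hclaim (-(starRingEnd ℂ S))
    have h3 : ((-(starRingEnd ℂ S)) * S).re = -(‖S‖ ^ 2) := by
      rw [neg_mul, Complex.neg_re, RCLike.conj_mul]
      norm_cast
    rw [h3] at h2
    have h4 : ‖S‖ ^ 2 = 0 := le_antisymm (by linarith) (sq_nonneg _)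
    have h5 : ‖S‖ = 0 := by nlinarith [norm_nonneg S]
    exact norm_eq_zero.mp h5
  · intro hS c
    rw [hiff c]
    have hk := aux_key hp ha hb c
    rw [hre c, hS, mul_zero, Complex.zero_re, mul_zero, add_zero] at hk
    exact hk
end

section
/- Let X be a uniformly convex Banach space satisfying a lower Pythagorean inequality ‖x + y‖^r ≥ ‖x‖^r + K‖y‖^r for some K, r > 0 whenever x is Birkhoff–James orthogonal to y. If X₁ ⊇ X₂ ⊇ X₃ ⊇ ⋯ are closed subspaces with intersection X_∞, and P_n denotes the metric (nearest-point) projection onto X_n, then for every x ∈ X, P_n x converges in norm to P_∞ x. -/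
theorem metric_projection_nested_limit {X : Type*} [NormedAddCommGroup X]
    [NormedSpace ℝ X] [UniformConvexSpace X] [CompleteSpace X]
    (K r : ℝ) (hK : 0 < K) (hr : 0 < r)
    (hpyth : ∀ x y : X, (∀ β : ℝ, ‖x‖ ≤ ‖x + β • y‖) →
      ‖x‖ ^ r + K * ‖y‖ ^ r ≤ ‖x + y‖ ^ r)
    (Xn : ℕ → Submodule ℝ X) (hclosed : ∀ n, IsClosed (Xn n : Set X))
    (hmono : ∀ m n, m ≤ n → Xn n ≤ Xn m)
    (x : X) (P : ℕ → X) (Pinf : X)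
    (hPmem : ∀ n, P n ∈ Xn n)
    (hPmin : ∀ n, ∀ y ∈ Xn n, ‖x - P n‖ ≤ ‖x - y‖)
    (hPinfmem : ∀ n, Pinf ∈ Xn n)
    (hPinfmin : ∀ y : X, (∀ n, y ∈ Xn n) → ‖x - Pinf‖ ≤ ‖x - y‖) :
    Filter.Tendsto P Filter.atTop (nhds Pinf) := by
  set d : ℕ → ℝ := fun n => ‖x - P n‖ with hd
  -- d is monotone
  have hdmono : Monotone d := by
    intro m n hmn
    exact hPmin m (P n) (hmono m n hmn (hPmem n))
  have hdle : ∀ n, d n ≤ ‖x - Pinf‖ := fun n => hPmin n Pinf (hPinfmem n)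
  -- key Pythagorean estimate
  have hkey : ∀ m n, m ≤ n → d m ^ r + K * ‖P m - P n‖ ^ r ≤ d n ^ r := by
    intro m n hmn
    have horth : ∀ β : ℝ, ‖x - P m‖ ≤ ‖(x - P m) + β • (P m - P n)‖ := by
      intro β
      have hz : P m - β • (P m - P n) ∈ Xn m :=
        sub_mem (hPmem m) (Submodule.smul_mem _ _
          (sub_mem (hPmem m) (hmono m n hmn (hPmem n))))
      have := hPmin m _ hz
      have heq : x - (P m - β • (P m - P n)) = (x - P m) + β • (P m - P n) := by abel
      rwa [heq] at this
    have h := hpyth (x - P m) (P m - P n) horth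
    have heq : (x - P m) + (P m - P n) = x - P n := by abel
    rwa [heq] at h
  -- d^r is monotone bounded, hence Cauchy
  have hdnn : ∀ n, 0 ≤ d n := fun n => norm_nonneg _
  have hermono : Monotone (fun n => d n ^ r) := fun m n hmn =>
    Real.rpow_le_rpow (hdnn m) (hdmono hmn) hr.le
  have herbdd : BddAbove (Set.range fun n => d n ^ r) := by
    refine ⟨‖x - Pinf‖ ^ r, ?_⟩
    rintro _ ⟨n, rfl⟩
    exact Real.rpow_le_rpow (hdnn n) (hdle n) hr.le
  have hertend := tendsto_atTop_ciSup hermono herbdd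
  have hercauchy : CauchySeq (fun n => d n ^ r) := hertend.cauchySeq
  -- P is Cauchy
  have hPcauchy : CauchySeq P := by
    rw [Metric.cauchySeq_iff']
    intro ε hε
    obtain ⟨N, hN⟩ := Metric.cauchySeq_iff'.mp hercauchy (K * ε ^ r)
      (mul_pos hK (Real.rpow_pos_of_pos hε r))
    refine ⟨N, fun n hn => ?_⟩
    have h1 := hkey N n hn
    have h2 := hN n hn
    rw [Real.dist_eq, abs_lt] at h2
    have h3 : K * ‖P N - P n‖ ^ r < K * ε ^ r := by nlinarith [h2.2]
    have h4 : ‖P N - P n‖ ^ r < ε ^ r := lt_of_mul_lt_mul_left h3 hK.le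
    have h5 : ‖P N - P n‖ < ε := by
      by_contra h
      exact absurd (Real.rpow_le_rpow hε.le (not_lt.mp h) hr.le) (not_le.mpr h4)
    rwa [dist_eq_norm, norm_sub_rev]
  obtain ⟨p, hp⟩ := cauchySeq_tendsto_of_complete hPcauchy
  -- p ∈ Xn n for all n
  have hpmem : ∀ n, p ∈ Xn n := by
    intro n
    refine (hclosed n).mem_of_tendsto hp ?_
    filter_upwards [Filter.eventually_ge_atTop n] with m hm
    exact hmono n m hm (hPmem m)
  -- ‖x - p‖ = ‖x - Pinf‖
  have hdtend : Filter.Tendsto d Filter.atTop (nhds ‖x - p‖) :=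
    (tendsto_const_nhds.sub hp).norm
  have hle1 : ‖x - p‖ ≤ ‖x - Pinf‖ := le_of_tendsto hdtend
    (Filter.Eventually.of_forall hdle)
  have hle2 : ‖x - Pinf‖ ≤ ‖x - p‖ := hPinfmin p hpmem
  have heqnorm : ‖x - p‖ = ‖x - Pinf‖ := le_antisymm hle1 hle2
  -- orthogonality of x - p to p - Pinf
  have horth : ∀ β : ℝ, ‖x - p‖ ≤ ‖(x - p) + β • (p - Pinf)‖ := by
    intro β
    have hstep : ∀ n, ‖x - P n‖ ≤ ‖(x - P n) + β • (p - Pinf)‖ := by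
      intro n
      have hz : P n - β • (p - Pinf) ∈ Xn n :=
        sub_mem (hPmem n) (Submodule.smul_mem _ _ (sub_mem (hpmem n) (hPinfmem n)))
      have := hPmin n _ hz
      have heq : x - (P n - β • (p - Pinf)) = (x - P n) + β • (p - Pinf) := by abel
      rwa [heq] at this
    have hrhs : Filter.Tendsto (fun n => ‖(x - P n) + β • (p - Pinf)‖)
        Filter.atTop (nhds ‖(x - p) + β • (p - Pinf)‖) :=
      (((tendsto_const_nhds.sub hp).add tendsto_const_nhds).norm)
    exact le_of_tendsto_of_tendsto' hdtend hrhs hstep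
  have hfinal := hpyth (x - p) (p - Pinf) horth
  have heq : (x - p) + (p - Pinf) = x - Pinf := by abel
  rw [heq, ← heqnorm] at hfinal
  have hzero : ‖p - Pinf‖ ^ r ≤ 0 := by nlinarith
  have : ‖p - Pinf‖ = 0 := by
    by_contra h
    have hpos : 0 < ‖p - Pinf‖ := lt_of_le_of_ne (norm_nonneg _) (Ne.symm h)
    exact absurd (Real.rpow_pos_of_pos hpos r) (not_lt.mpr hzero)
  have hpeq : p = Pinf := by
    rwa [norm_sub_eq_zero_iff] at this
  rwa [hpeq] at hp
end

section
/- A nonzero function f(z) = Σ_{k≥0} a_k z^k in ℓ^p_A is p-inner if and only if Σ_{k≥0} |a_{k+n}|^{p-2} conj(a_{k+n}) a_k = 0 for every n ≥ 1. In particular, f(z) = z^n is p-inner for every n ≥ 0. -/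
/-- Membership in `ℓ^p_A`, via the coefficient sequence. -/
def Memlp (p : ℝ) (a : ℕ → ℂ) : Prop := Summable fun k => ‖a k‖ ^ p

/-- Coefficients of `S^n f`, where `S` is the shift `(Sf)(z) = z f(z)`. -/
def shiftn (n : ℕ) (a : ℕ → ℂ) : ℕ → ℂ := fun m => if m < n then 0 else a (m - n)

/-- Birkhoff-James orthogonality `a ⊥_p b` in `ℓ^p_A`. -/
def orth (p : ℝ) (a b : ℕ → ℂ) : Prop :=
  ∀ β : ℂ, pnorm p a ≤ pnorm p fun k => a k + β * b k

/-- `g` belongs to `[Sf]`, the closed span of `{S^k f : k ≥ 1}` in `ℓ^p_A`. -/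
def inSpanSf (p : ℝ) (f g : ℕ → ℂ) : Prop :=
  ∀ ε > 0, ∃ (N : ℕ) (c : ℕ → ℂ),
    pnorm p (fun m => g m - ∑ k ∈ Finset.range N, c k * shiftn (k + 1) f m) < ε

open Filter Topology

noncomputable def Gc (p : ℝ) (x : ℂ) : ℂ := ((‖x‖ ^ (p - 2) : ℝ) : ℂ) * (starRingEnd ℂ) x

lemma Gc_zero (p : ℝ) : Gc p 0 = 0 := by simp [Gc]

lemma norm_Gc {p : ℝ} (hp : 1 < p) (x : ℂ) : ‖Gc p x‖ = ‖x‖ ^ (p - 1) := by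
  rcases eq_or_ne x 0 with rfl | hx
  · rw [Gc_zero]
    simp [Real.zero_rpow (show p - 1 ≠ 0 by linarith)]
  · have hx0 : (0 : ℝ) < ‖x‖ := norm_pos_iff.mpr hx
    rw [Gc, norm_mul, Complex.norm_real, RCLike.norm_conj, Real.norm_eq_abs,
      abs_of_nonneg (Real.rpow_nonneg hx0.le _)]
    rw [← Real.rpow_add_one hx0.ne' (p - 2), show p - 2 + 1 = p - 1 by ring]

lemma continuous_Gc {p : ℝ} (hp : 1 < p) : Continuous (Gc p) := by
  rw [continuous_iff_continuousAt]
  intro x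
  rcases eq_or_ne x 0 with rfl | hx
  · rw [ContinuousAt, Gc_zero]
    apply squeeze_zero_norm (fun y => (norm_Gc hp y).le)
    have h1 : ContinuousAt (fun s : ℝ => s ^ (p - 1)) 0 :=
      Real.continuousAt_rpow_const 0 (p - 1) (Or.inr (by linarith))
    have h2 : Tendsto (fun y : ℂ => ‖y‖ ^ (p - 1)) (𝓝 0) (𝓝 ((0 : ℝ) ^ (p - 1))) := by
      apply h1.tendsto.comp
      simpa using continuous_norm.tendsto (0 : ℂ)
    simpa [Real.zero_rpow (show p - 1 ≠ 0 by linarith)] using h2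
  · have hnx : ‖x‖ ≠ 0 := norm_ne_zero_iff.mpr hx
    apply ContinuousAt.mul
    · apply Complex.continuous_ofReal.continuousAt.comp
      exact (Real.continuousAt_rpow_const _ _ (Or.inl hnx)).comp continuous_norm.continuousAt
    · exact (continuous_star.continuousAt : ContinuousAt (starRingEnd ℂ) x)

lemma tangent_ineq {p : ℝ} (hp : 1 < p) {x y : ℝ} (hx : 0 ≤ x) (hy : 0 ≤ y) :
    y ^ p + p * y ^ (p - 1) * (x - y) ≤ x ^ p := by
  rcases eq_or_lt_of_le hy with h0 | hy0
  · rw [← h0]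
    rw [Real.zero_rpow (show p ≠ 0 by linarith), Real.zero_rpow (show p - 1 ≠ 0 by linarith)]
    simpa using Real.rpow_nonneg hx p
  · have h1 : -1 ≤ x / y - 1 := by
      have : 0 ≤ x / y := div_nonneg hx hy0.le
      linarith
    have key := one_add_mul_self_le_rpow_one_add h1 hp.le
    rw [show 1 + (x / y - 1) = x / y by ring, Real.div_rpow hx hy0.le] at key
    have hyp : (0 : ℝ) < y ^ p := Real.rpow_pos_of_pos hy0 p
    have key2 : y ^ p * (1 + p * (x / y - 1)) ≤ x ^ p := by
      calc y ^ p * (1 + p * (x / y - 1)) ≤ y ^ p * (x ^ p / y ^ p) :=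
            mul_le_mul_of_nonneg_left key hyp.le
        _ = x ^ p := by field_simp
    have hy1 : y ^ (p - 1) = y ^ p / y := by
      rw [Real.rpow_sub_one hy0.ne']
    calc y ^ p + p * y ^ (p - 1) * (x - y) = y ^ p * (1 + p * (x / y - 1)) := by
          rw [hy1]; field_simp
      _ ≤ x ^ p := key2

lemma key_ineq {p : ℝ} (hp : 1 < p) (w z : ℂ) :
    ‖w‖ ^ p + p * (Gc p w * z).re ≤ ‖w + z‖ ^ p := by
  rcases eq_or_ne w 0 with rfl | hw
  · rw [Gc_zero]
    simp [Real.zero_rpow (show p ≠ 0 by linarith)]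
    simpa using Real.rpow_nonneg (norm_nonneg z) p
  · have hnw : (0 : ℝ) < ‖w‖ := norm_pos_iff.mpr hw
    have h1 := tangent_ineq hp (norm_nonneg (w + z)) (norm_nonneg w)
    have h2 : (starRingEnd ℂ w * z).re ≤ ‖w‖ * ‖w + z‖ - ‖w‖ ^ 2 := by
      have ha : (starRingEnd ℂ w * (w + z)).re ≤ ‖w‖ * ‖w + z‖ := by
        calc (starRingEnd ℂ w * (w + z)).re ≤ ‖starRingEnd ℂ w * (w + z)‖ := by
              exact Complex.re_le_norm _
          _ = ‖w‖ * ‖w + z‖ := by rw [norm_mul, RCLike.norm_conj]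
      have hww : (starRingEnd ℂ w * w).re = ‖w‖ ^ 2 := by
        rw [mul_comm, Complex.mul_conj, Complex.ofReal_re, Complex.normSq_eq_norm_sq]
      have : (starRingEnd ℂ w * (w + z)).re
          = (starRingEnd ℂ w * w).re + (starRingEnd ℂ w * z).re := by
        rw [mul_add, Complex.add_re]
      linarith
    have hre : (Gc p w * z).re = ‖w‖ ^ (p - 2) * (starRingEnd ℂ w * z).re := by
      rw [Gc, mul_assoc, Complex.re_ofReal_mul]
    have hr : (0 : ℝ) ≤ ‖w‖ ^ (p - 2) := Real.rpow_nonneg hnw.le _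
    have hr1 : ‖w‖ ^ (p - 1) = ‖w‖ ^ (p - 2) * ‖w‖ := by
      rw [← Real.rpow_add_one hnw.ne' (p - 2), show p - 2 + 1 = p - 1 by ring]
    rw [hre]
    rw [hr1] at h1
    calc ‖w‖ ^ p + p * (‖w‖ ^ (p - 2) * ((starRingEnd ℂ) w * z).re)
        ≤ ‖w‖ ^ p + p * ‖w‖ ^ (p - 2) * (‖w‖ * ‖w + z‖ - ‖w‖ ^ 2) := by
          have hmul := mul_le_mul_of_nonneg_left h2
            (mul_nonneg (by linarith : (0:ℝ) ≤ p) hr)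
          linarith [hmul]
      _ = ‖w‖ ^ p + p * (‖w‖ ^ (p - 2) * ‖w‖) * (‖w + z‖ - ‖w‖) := by ring
      _ ≤ ‖w + z‖ ^ p := h1

lemma add_rpow_le {p : ℝ} (hp : 1 < p) {x y : ℝ} (hx : 0 ≤ x) (hy : 0 ≤ y) :
    (x + y) ^ p ≤ 2 ^ p * (x ^ p + y ^ p) := by
  have h1 : x + y ≤ 2 * max x y := by
    rcases le_total x y with h | h
    · rw [max_eq_right h]; linarith
    · rw [max_eq_left h]; linarith
  calc (x + y) ^ p ≤ (2 * max x y) ^ p :=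
        Real.rpow_le_rpow (by positivity) h1 (by linarith)
    _ = 2 ^ p * (max x y) ^ p := Real.mul_rpow (by norm_num) (le_max_of_le_left hx)
    _ ≤ 2 ^ p * (x ^ p + y ^ p) := by
        apply mul_le_mul_of_nonneg_left _ (by positivity)
        rcases le_total x y with h | h
        · rw [max_eq_right h]
          nlinarith [Real.rpow_nonneg hx p]
        · rw [max_eq_left h]
          nlinarith [Real.rpow_nonneg hy p]

lemma X_pow_mul_le {p : ℝ} (hp : 1 < p) {X Y : ℝ} (hX : 0 ≤ X) (hY : 0 ≤ Y) :
    X ^ (p - 1) * Y ≤ X ^ p + Y ^ p := by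
  have hXp := Real.rpow_nonneg hX p
  have hYp := Real.rpow_nonneg hY p
  rcases le_total X Y with h | h
  · calc X ^ (p - 1) * Y ≤ Y ^ (p - 1) * Y :=
          mul_le_mul_of_nonneg_right (Real.rpow_le_rpow hX h (by linarith)) hY
      _ = Y ^ p := by
          nth_rewrite 2 [show Y = Y ^ (1 : ℝ) by rw [Real.rpow_one]]
          rw [← Real.rpow_add' hY (by rw [show p - 1 + 1 = p by ring]; exact ne_of_gt (by linarith)),
            show p - 1 + 1 = p by ring]
      _ ≤ X ^ p + Y ^ p := by linarith
  · calc X ^ (p - 1) * Y ≤ X ^ (p - 1) * X :=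
          mul_le_mul_of_nonneg_left h (Real.rpow_nonneg hX _)
      _ = X ^ p := by
          nth_rewrite 2 [show X = X ^ (1 : ℝ) by rw [Real.rpow_one]]
          rw [← Real.rpow_add' hX (by rw [show p - 1 + 1 = p by ring]; exact ne_of_gt (by linarith)),
            show p - 1 + 1 = p by ring]
      _ ≤ X ^ p + Y ^ p := by linarith

lemma summable_affine {p : ℝ} (hp : 1 < p) {u v : ℕ → ℝ} (hu : Summable fun k => u k ^ p)
    (hv : Summable fun k => v k ^ p) (h0u : ∀ k, 0 ≤ u k) (h0v : ∀ k, 0 ≤ v k) :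
    Summable fun k => (u k + v k) ^ p := by
  apply Summable.of_nonneg_of_le
    (fun k => Real.rpow_nonneg (add_nonneg (h0u k) (h0v k)) p)
    (fun k => add_rpow_le hp (h0u k) (h0v k)) ((hu.add hv).mul_left _)

lemma summable_Gc_mul {p : ℝ} (hp : 1 < p) {a b : ℕ → ℂ}
    (ha : Summable fun k => ‖a k‖ ^ p) (hb : Summable fun k => ‖b k‖ ^ p) (c : ℂ) :
    Summable fun k => Gc p (a k + c * b k) * b k := by
  have hcb : Summable fun k => (‖c‖ * ‖b k‖) ^ p := by
    have : (fun k => (‖c‖ * ‖b k‖) ^ p) = fun k => ‖c‖ ^ p * ‖b k‖ ^ p :=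
      funext fun k => Real.mul_rpow (norm_nonneg _) (norm_nonneg _)
    rw [this]
    exact hb.mul_left _
  apply Summable.of_norm_bounded (g := fun k => (‖a k‖ + ‖c‖ * ‖b k‖) ^ p + ‖b k‖ ^ p)
  · exact (summable_affine hp ha hcb (fun k => norm_nonneg _)
      (fun k => by positivity)).add hb
  · intro k
    rw [norm_mul, norm_Gc hp]
    have hw : ‖a k + c * b k‖ ≤ ‖a k‖ + ‖c‖ * ‖b k‖ := by
      calc ‖a k + c * b k‖ ≤ ‖a k‖ + ‖c * b k‖ := norm_add_le _ _
        _ = ‖a k‖ + ‖c‖ * ‖b k‖ := by rw [norm_mul]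
    calc ‖a k + c * b k‖ ^ (p - 1) * ‖b k‖
        ≤ (‖a k‖ + ‖c‖ * ‖b k‖) ^ (p - 1) * ‖b k‖ :=
          mul_le_mul_of_nonneg_right
            (Real.rpow_le_rpow (norm_nonneg _) hw (by linarith)) (norm_nonneg _)
      _ ≤ (‖a k‖ + ‖c‖ * ‖b k‖) ^ p + ‖b k‖ ^ p :=
          X_pow_mul_le hp (by positivity) (norm_nonneg _)

set_option maxHeartbeats 1000000 in
lemma orth_iff_core {p : ℝ} (hp : 1 < p) {a b : ℕ → ℂ}
    (ha : Summable fun k => ‖a k‖ ^ p) (hb : Summable fun k => ‖b k‖ ^ p) :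
    (∀ β : ℂ, pnorm p a ≤ pnorm p fun k => a k + β * b k) ↔
      (∑' k, Gc p (a k) * b k) = 0 := by
  have hp0 : (0 : ℝ) < p := by linarith
  have hnn : ∀ (f : ℕ → ℂ) (k : ℕ), (0:ℝ) ≤ ‖f k‖ ^ p :=
    fun f k => Real.rpow_nonneg (norm_nonneg _) _
  have hF : ∀ c : ℂ, Summable fun k => ‖a k + c * b k‖ ^ p := by
    intro c
    have hcb : Summable fun k => (‖c‖ * ‖b k‖) ^ p := by
      have : (fun k => (‖c‖ * ‖b k‖) ^ p) = fun k => ‖c‖ ^ p * ‖b k‖ ^ p :=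
        funext fun k => Real.mul_rpow (norm_nonneg _) (norm_nonneg _)
      rw [this]
      exact hb.mul_left _
    have h1 : Summable fun k => (‖a k‖ + ‖c‖ * ‖b k‖) ^ p :=
      summable_affine hp ha hcb (fun k => norm_nonneg _) (fun k => by positivity)
    refine Summable.of_nonneg_of_le (fun k => hnn (fun j => a j + c * b j) k) (fun k => ?_) h1
    apply Real.rpow_le_rpow (norm_nonneg _) ?_ hp0.le
    calc ‖a k + c * b k‖ ≤ ‖a k‖ + ‖c * b k‖ := norm_add_le _ _
      _ = ‖a k‖ + ‖c‖ * ‖b k‖ := by rw [norm_mul]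
  have hGa : Summable fun k => Gc p (a k) * b k := by
    have := summable_Gc_mul hp ha hb 0
    simpa using this
  have main : ∀ c : ℂ,
      (∑' k, ‖a k + c * b k‖ ^ p) + p * ((-c) * ∑' k, Gc p (a k + c * b k) * b k).re
        ≤ ∑' k, ‖a k‖ ^ p := by
    intro c
    have hpt : ∀ k, ‖a k + c * b k‖ ^ p
        + p * ((-c) * (Gc p (a k + c * b k) * b k)).re ≤ ‖a k‖ ^ p := by
      intro k
      have h := key_ineq hp (a k + c * b k) (-(c * b k))
      rw [show a k + c * b k + -(c * b k) = a k by ring,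
        show Gc p (a k + c * b k) * -(c * b k)
          = (-c) * (Gc p (a k + c * b k) * b k) by ring] at h
      exact h
    have hre : Summable fun k => ((-c) * (Gc p (a k + c * b k) * b k)).re :=
      (Complex.hasSum_re ((summable_Gc_mul hp ha hb c).mul_left (-c)).hasSum).summable
    have h := Summable.tsum_le_tsum hpt ((hF c).add (hre.mul_left p)) ha
    rw [Summable.tsum_add (hF c) (hre.mul_left p), tsum_mul_left,
      ← Complex.re_tsum ((summable_Gc_mul hp ha hb c).mul_left (-c)), tsum_mul_left] at h
    exact h
  constructor
  · intro horth
    have hsum_ineq : ∀ c : ℂ, (∑' k, ‖a k‖ ^ p) ≤ ∑' k, ‖a k + c * b k‖ ^ p := by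
      intro c
      have h := horth c
      simp only [pnorm] at h
      have h1 : (0:ℝ) ≤ ∑' k, ‖a k‖ ^ p :=
        tsum_nonneg fun k => Real.rpow_nonneg (norm_nonneg _) _
      have h2 : (0:ℝ) ≤ ∑' k, ‖a k + c * b k‖ ^ p :=
        tsum_nonneg fun k => Real.rpow_nonneg (norm_nonneg _) _
      exact (Real.rpow_le_rpow_iff h1 h2 (one_div_pos.mpr hp0)).mp h
    have hstep : ∀ β : ℂ, ∀ t : ℝ, t ∈ Set.Ioc (0:ℝ) 1 →
        0 ≤ (β * ∑' k, Gc p (a k + ((t : ℝ) : ℂ) * β * b k) * b k).re := by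
      intro β t ht
      set c : ℂ := ((t : ℝ) : ℂ) * β with hc
      have h1 := main c
      have h2 := hsum_ineq c
      have h3 : 0 ≤ (c * ∑' k, Gc p (a k + c * b k) * b k).re := by
        rw [neg_mul, Complex.neg_re] at h1
        by_contra hneg
        push_neg at hneg
        nlinarith
      rw [hc, mul_assoc, Complex.re_ofReal_mul] at h3
      by_contra hneg
      push_neg at hneg
      nlinarith [ht.1, h3]
    have hβ : ∀ β : ℂ, 0 ≤ (β * ∑' k, Gc p (a k) * b k).re := by
      intro β
      have hlim : Tendsto (fun t : ℝ => ∑' k, Gc p (a k + ((t : ℝ) : ℂ) * β * b k) * b k)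
          (𝓝[>] (0:ℝ)) (𝓝 (∑' k, Gc p (a k) * b k)) := by
        apply tendsto_tsum_of_dominated_convergence
          (bound := fun k => (‖a k‖ + ‖β‖ * ‖b k‖) ^ p + ‖b k‖ ^ p)
        · have hcb : Summable fun k => (‖β‖ * ‖b k‖) ^ p := by
            have : (fun k => (‖β‖ * ‖b k‖) ^ p) = fun k => ‖β‖ ^ p * ‖b k‖ ^ p :=
              funext fun k => Real.mul_rpow (norm_nonneg _) (norm_nonneg _)
            rw [this]
            exact hb.mul_left _
          exact (summable_affine hp ha hcb (fun k => norm_nonneg _)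
            (fun k => by positivity)).add hb
        · intro k
          have hcont : ContinuousAt (fun t : ℝ => Gc p (a k + ((t : ℝ) : ℂ) * β * b k) * b k) 0 := by
            apply ContinuousAt.mul ?_ continuousAt_const
            apply (continuous_Gc hp).continuousAt.comp
            apply ContinuousAt.add continuousAt_const
            exact (Complex.continuous_ofReal.continuousAt.mul continuousAt_const).mul
              continuousAt_const
          have h : Tendsto (fun t : ℝ => Gc p (a k + ((t : ℝ) : ℂ) * β * b k) * b k)
              (𝓝[>] (0:ℝ)) (𝓝 (Gc p (a k + ((0:ℝ) : ℂ) * β * b k) * b k)) :=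
            hcont.tendsto.mono_left nhdsWithin_le_nhds
          simpa using h
        · filter_upwards [Ioc_mem_nhdsGT (show (0:ℝ) < 1 by norm_num)] with t ht
          intro k
          rw [norm_mul, norm_Gc hp]
          have hw : ‖a k + ((t : ℝ) : ℂ) * β * b k‖ ≤ ‖a k‖ + ‖β‖ * ‖b k‖ := by
            have habs : |t| ≤ 1 := abs_le.mpr ⟨by linarith [ht.1], ht.2⟩
            calc ‖a k + ((t : ℝ) : ℂ) * β * b k‖ ≤ ‖a k‖ + ‖((t : ℝ) : ℂ) * β * b k‖ :=
                  norm_add_le _ _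
              _ = ‖a k‖ + |t| * (‖β‖ * ‖b k‖) := by
                  rw [norm_mul, norm_mul, Complex.norm_real, Real.norm_eq_abs, mul_assoc]
              _ ≤ ‖a k‖ + 1 * (‖β‖ * ‖b k‖) := by
                  have := mul_le_mul_of_nonneg_right habs
                    (mul_nonneg (norm_nonneg β) (norm_nonneg (b k)))
                  linarith
              _ = ‖a k‖ + ‖β‖ * ‖b k‖ := by ring
          calc ‖a k + ((t : ℝ) : ℂ) * β * b k‖ ^ (p - 1) * ‖b k‖
              ≤ (‖a k‖ + ‖β‖ * ‖b k‖) ^ (p - 1) * ‖b k‖ :=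
                mul_le_mul_of_nonneg_right
                  (Real.rpow_le_rpow (norm_nonneg _) hw (by linarith)) (norm_nonneg _)
            _ ≤ (‖a k‖ + ‖β‖ * ‖b k‖) ^ p + ‖b k‖ ^ p :=
                X_pow_mul_le hp (by positivity) (norm_nonneg _)
      have hlim2 : Tendsto (fun t : ℝ =>
          (β * ∑' k, Gc p (a k + ((t : ℝ) : ℂ) * β * b k) * b k).re)
          (𝓝[>] (0:ℝ)) (𝓝 ((β * ∑' k, Gc p (a k) * b k).re)) :=
        (Complex.continuous_re.tendsto _).comp (hlim.const_mul β)
      apply ge_of_tendsto hlim2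
      filter_upwards [Ioc_mem_nhdsGT (show (0:ℝ) < 1 by norm_num)] with t ht
      exact hstep β t ht
    set T := ∑' k, Gc p (a k) * b k with hT
    have h1 := hβ (-(starRingEnd ℂ T))
    have h2 : (-(starRingEnd ℂ T) * T).re = - Complex.normSq T := by
      rw [neg_mul, Complex.neg_re, mul_comm, Complex.mul_conj, Complex.ofReal_re]
    rw [h2] at h1
    have h3 : Complex.normSq T = 0 := le_antisymm (by linarith) (Complex.normSq_nonneg T)
    exact Complex.normSq_eq_zero.mp h3
  · intro hT β
    simp only [pnorm]
    apply Real.rpow_le_rpow (tsum_nonneg fun k => hnn a k) ?_ (le_of_lt (one_div_pos.mpr hp0))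
    have hpt : ∀ k, ‖a k‖ ^ p + p * (β * (Gc p (a k) * b k)).re
        ≤ ‖a k + β * b k‖ ^ p := by
      intro k
      have h := key_ineq hp (a k) (β * b k)
      rw [show Gc p (a k) * (β * b k) = β * (Gc p (a k) * b k) by ring] at h
      exact h
    have hre : Summable fun k => (β * (Gc p (a k) * b k)).re :=
      (Complex.hasSum_re (hGa.mul_left β).hasSum).summable
    have h := Summable.tsum_le_tsum hpt (ha.add (hre.mul_left p)) (hF β)
    rw [Summable.tsum_add ha (hre.mul_left p), tsum_mul_left,
      ← Complex.re_tsum (hGa.mul_left β), tsum_mul_left, hT] at h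
    simpa using h


lemma summable_shiftn {p : ℝ} (hp : 0 < p) {a : ℕ → ℂ}
    (ha : Summable fun k => ‖a k‖ ^ p) (n : ℕ) :
    Summable fun k => ‖shiftn n a k‖ ^ p := by
  have hinj : Function.Injective (fun k : ℕ => k + n) := add_left_injective n
  apply (hinj.summable_iff ?_).mp
  · have h : ((fun m => ‖shiftn n a m‖ ^ p) ∘ fun k => k + n) = fun k => ‖a k‖ ^ p := by
      funext k
      have : ¬ (k + n < n) := by omega
      simp [shiftn, this, Function.comp]
    rw [h]
    exact ha
  · intro m hm
    have hmn : m < n := by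
      by_contra h
      exact hm ⟨m - n, Nat.sub_add_cancel (le_of_not_gt h)⟩
    simp [shiftn, hmn, Real.zero_rpow (ne_of_gt hp)]

set_option maxHeartbeats 1600000 in
theorem p_inner_coefficient_criterion (p : ℝ) (hp : 1 < p)
    (a : ℕ → ℂ) (ha : Memlp p a) (ha0 : a ≠ 0) :
    ((∀ n : ℕ, 1 ≤ n → orth p a (shiftn n a)) ↔
      ∀ n : ℕ, 1 ≤ n →
        ∑' k, ((‖a (k + n)‖ ^ (p - 2) : ℝ) : ℂ) * starRingEnd ℂ (a (k + n)) * a k = 0) ∧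
    (∀ m : ℕ, (fun k => if k = m then (1 : ℂ) else 0) ≠ 0 ∧
      ∀ n : ℕ, 1 ≤ n → orth p (fun k => if k = m then (1 : ℂ) else 0)
        (shiftn n fun k => if k = m then (1 : ℂ) else 0)) := by
  have hp0 : (0:ℝ) < p := by linarith
  have ha' : Summable fun k => ‖a k‖ ^ p := ha
  have hsum_eq : ∀ (f : ℕ → ℂ) (n : ℕ), (∑' k, Gc p (f k) * shiftn n f k)
      = ∑' k, ((‖f (k + n)‖ ^ (p - 2) : ℝ) : ℂ) * starRingEnd ℂ (f (k + n)) * f k := by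
    intro f n
    have hinj : Function.Injective (fun k : ℕ => k + n) := add_left_injective n
    have hsupp : Function.support (fun m => Gc p (f m) * shiftn n f m)
        ⊆ Set.range (fun k : ℕ => k + n) := by
      intro m hm
      rcases lt_or_ge m n with h | h
      · exfalso; apply hm; simp [shiftn, h]
      · exact ⟨m - n, Nat.sub_add_cancel h⟩
    have heq := hinj.tsum_eq hsupp
    rw [← heq]
    apply tsum_congr
    intro k
    have hlt : ¬ (k + n < n) := by omega
    simp [shiftn, hlt, Gc]
  constructor
  · constructor
    · intro h n hn
      rw [← hsum_eq a n]
      exact (orth_iff_core hp ha' (summable_shiftn hp0 ha' n)).mp (h n hn)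
    · intro h n hn
      apply (orth_iff_core hp ha' (summable_shiftn hp0 ha' n)).mpr
      rw [hsum_eq a n]
      exact h n hn
  · intro m
    constructor
    · intro hcontra
      have := congrFun hcontra m
      simp at this
    · intro n hn
      set e : ℕ → ℂ := fun k => if k = m then (1:ℂ) else 0 with he
      have hesum : Summable fun k => ‖e k‖ ^ p := by
        apply summable_of_ne_finset_zero (s := ({m} : Finset ℕ))
        intro k hk
        simp only [Finset.mem_singleton] at hk
        simp [he, hk, Real.zero_rpow (ne_of_gt hp0)]
      have hzero : (∑' k, Gc p (e k) * shiftn n e k) = 0 := by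
        have hterm : ∀ k, Gc p (e k) * shiftn n e k = 0 := by
          intro k
          by_cases hk : k = m
          · subst hk
            have hs : shiftn n e k = 0 := by
              simp only [shiftn, he]
              split_ifs with h1 h2
              · rfl
              · exfalso; omega
              · rfl
            rw [hs, mul_zero]
          · have hek : e k = 0 := by simp [he, hk]
            rw [hek, Gc_zero, zero_mul]
        simp [hterm]
      exact (orth_iff_core hp hesum (summable_shiftn hp0 hesum n)).mpr hzero
end
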